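/- arXiv:0804.0905 — 8 statements merged into one kernel-verified Lean document; each statement's English description precedes it below -/
import Mathlib

section
/- Let a, ν > 0 and let ω ∈ ℂ with Re(ω) > 0 and ω^2 ∉ {-ν k^2 π^2 / a^2 : k ∈ ℕ}. Let g be the unique solution on (0,a) of (ω^2 - ν g'') = 1 with g(0) = g(a) = 0. Then ∫_0^a g(z) dz = (a/ω^2) · [1 + 2(1 - cosh(ωa/√ν)) / ((ωa/√ν) sinh(ωa/√ν))]. -/
/-!
Integrating the equation over `[0, a]` gives `ω² ∫ g - ν (g'(a) - g'(0)) = a`. To find the flux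
`g'(a) - g'(0)`, test the equation against `φ(z) = cosh (ω (z - a/2) / √ν)`, which solves the
homogeneous equation and is even about `a/2`: by Green's identity and `g(0) = g(a) = 0`,
`∫ φ = -ν cosh (ωa/2√ν) (g'(a) - g'(0))`. Since `Re ω > 0`, `cosh (ωa/2√ν) ≠ 0`, and the claimed
formula is the half-angle form `(1 - cosh 2x) / sinh 2x = -tanh x` of the result.
-/

open Complex Set intervalIntegral

theorem Complex.cosh_ne_zero_of_re_ne_zero {z : ℂ} (hz : z.re ≠ 0) : cosh z ≠ 0 := by
  intro h
  have hexp : exp z = -exp (-z) := by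
    rw [eq_neg_iff_add_eq_zero, ← two_cosh, h, mul_zero]
  have := congrArg norm hexp
  rw [norm_neg, norm_exp, norm_exp, Real.exp_eq_exp, neg_re] at this
  exact hz (by linarith)

/-- Holds without side conditions: where `sinh x` or `cosh x` vanishes, both sides are `0`. -/
theorem Complex.one_sub_cosh_two_mul_div_sinh_two_mul (x : ℂ) :
    (1 - cosh (2 * x)) / sinh (2 * x) = -tanh x := by
  rw [cosh_two_mul, sinh_two_mul, tanh_eq_sinh_div_cosh]
  rcases eq_or_ne (sinh x) 0 with hs | hs
  · simp [hs]
  rcases eq_or_ne (cosh x) 0 with hc | hc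
  · simp [hc]
  field_simp
  linear_combination -cosh_sq_sub_sinh_sq x

theorem intervalIntegral.integral_mul_deriv_deriv_sub_deriv_deriv_mul {𝕜 : Type*} [RCLike 𝕜]
    {f f' f'' g g' g'' : ℝ → 𝕜} {a b : ℝ}
    (hf : ∀ x ∈ uIcc a b, HasDerivAt f (f' x) x) (hf' : ∀ x ∈ uIcc a b, HasDerivAt f' (f'' x) x)
    (hg : ∀ x ∈ uIcc a b, HasDerivAt g (g' x) x) (hg' : ∀ x ∈ uIcc a b, HasDerivAt g' (g'' x) x)
    (hf'' : IntervalIntegrable f'' MeasureTheory.volume a b)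
    (hg'' : IntervalIntegrable g'' MeasureTheory.volume a b) :
    ∫ x in a..b, (f x * g'' x - f'' x * g x) =
      (f b * g' b - f' b * g b) - (f a * g' a - f' a * g a) := by
  refine integral_eq_sub_of_hasDerivAt (f := fun x => f x * g' x - f' x * g x)
    (fun x hx => ?_) ?_
  · exact (((hf x hx).mul (hg' x hx)).sub ((hf' x hx).mul (hg x hx))).congr_deriv (by ring)
  · have hfc : ContinuousOn f (uIcc a b) := fun x hx => (hf x hx).continuousAt.continuousWithinAt
    have hgc : ContinuousOn g (uIcc a b) := fun x hx => (hg x hx).continuousAt.continuousWithinAt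
    exact (hg''.continuousOn_mul hfc).sub (hf''.mul_continuousOn hgc)

theorem Complex.hasDerivAt_cosh_mul_sub (l : ℂ) (m x : ℝ) :
    HasDerivAt (fun x : ℝ => cosh (l * (x - m))) (l * sinh (l * (x - m))) x := by
  simpa [mul_comm] using (((hasDerivAt_id (x : ℂ)).sub_const (m : ℂ)).const_mul l).ccosh.comp_ofReal

theorem Complex.hasDerivAt_sinh_mul_sub (l : ℂ) (m x : ℝ) :
    HasDerivAt (fun x : ℝ => sinh (l * (x - m))) (l * cosh (l * (x - m))) x := by
  simpa [mul_comm] using (((hasDerivAt_id (x : ℂ)).sub_const (m : ℂ)).const_mul l).csinh.comp_ofReal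

theorem Complex.integral_cosh_mul_sub {l : ℂ} (hl : l ≠ 0) (m b c : ℝ) :
    ∫ x in b..c, cosh (l * (x - m)) = (sinh (l * (c - m)) - sinh (l * (b - m))) / l := by
  rw [sub_div]
  refine integral_eq_sub_of_hasDerivAt (f := fun x : ℝ => sinh (l * (x - m)) / l)
    (fun x _ => ?_)
    ((by fun_prop : Continuous fun x : ℝ => cosh (l * (x - m))).intervalIntegrable _ _)
  exact ((hasDerivAt_sinh_mul_sub l m x).div_const l).congr_deriv (mul_div_cancel_left₀ _ hl)

theorem mul_integral_eq_of_dirichlet_problem {a : ℝ} (ha : 0 ≤ a) {q l : ℂ} (hl : l ≠ 0)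
    (hc : cosh (l * a / 2) ≠ 0) {g : ℝ → ℂ} (hg : ContDiff ℝ 2 g)
    (hode : ∀ z ∈ Icc 0 a, q * l ^ 2 * g z - q * deriv (deriv g) z = 1)
    (hg0 : g 0 = 0) (hga : g a = 0) :
    q * l ^ 2 * ∫ z in 0..a, g z = a - 2 * tanh (l * a / 2) / l := by
  obtain ⟨hg_diff, -, hg'⟩ :=
    contDiff_succ_iff_deriv.mp (by exact_mod_cast hg : ContDiff ℝ (1 + 1) g)
  have hg_int : IntervalIntegrable g MeasureTheory.volume 0 a :=
    hg_diff.continuous.intervalIntegrable _ _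
  have hg''_int : IntervalIntegrable (deriv (deriv g)) MeasureTheory.volume 0 a :=
    (hg'.continuous_deriv le_rfl).intervalIntegrable _ _
  have hode' : ∀ z ∈ uIcc 0 a, q * l ^ 2 * g z - q * deriv (deriv g) z = 1 := by
    rwa [uIcc_of_le ha]
  have total : q * l ^ 2 * (∫ z in 0..a, g z) - q * (deriv g a - deriv g 0) = a := by
    have h := integral_congr (μ := MeasureTheory.volume) hode'
    rwa [integral_sub (hg_int.const_mul _) (hg''_int.const_mul _), integral_const_mul,
      integral_const_mul, integral_deriv_eq_sub (fun x _ => (hg'.differentiable one_ne_zero x))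
      hg''_int, integral_const, sub_zero, real_smul, mul_one] at h
  set φ : ℝ → ℂ := fun x => cosh (l * (x - (a / 2 : ℝ)))
  have green : ∫ z in 0..a, (φ z * deriv (deriv g) z - l ^ 2 * φ z * g z) =
      φ a * deriv g a - φ 0 * deriv g 0 := by
    rw [integral_mul_deriv_deriv_sub_deriv_deriv_mul
      (f' := fun x => l * sinh (l * (x - (a / 2 : ℝ))))
      (fun x _ => hasDerivAt_cosh_mul_sub l _ x)
      (fun x _ => ((hasDerivAt_sinh_mul_sub l _ x).const_mul l).congr_deriv (by ring))
      (fun x _ => (hg_diff x).hasDerivAt)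
      (fun x _ => (hg'.differentiable one_ne_zero x).hasDerivAt)
      ((by fun_prop : Continuous fun x => l ^ 2 * φ x).intervalIntegrable _ _) hg''_int,
      hg0, hga]
    ring
  have flux : ∫ z in 0..a, φ z = -q * (φ a * deriv g a - φ 0 * deriv g 0) := by
    rw [← green, ← integral_const_mul]
    refine integral_congr fun z hz => ?_
    linear_combination (-φ z) * hode' z hz
  have hφa : φ a = cosh (l * a / 2) := by simp only [φ]; push_cast; ring_nf
  have hφ0 : φ 0 = cosh (l * a / 2) := by
    simp only [φ]; push_cast; rw [← cosh_neg]; ring_nf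
  have kernel_integral : ∫ z in 0..a, φ z = 2 * sinh (l * a / 2) / l := by
    rw [integral_cosh_mul_sub hl]
    push_cast
    rw [show l * (0 - a / 2) = -(l * a / 2) by ring, sinh_neg,
      show l * (a - a / 2) = l * a / 2 by ring]
    ring
  rw [kernel_integral, hφa, hφ0] at flux
  rw [tanh_eq_sinh_div_cosh]
  field_simp at flux ⊢
  linear_combination l * cosh (l * a / 2) * total + flux

theorem stmt_4_general (a ν : ℝ) (ha : 0 < a) (hν : 0 < ν) (ω : ℂ) (hω : 0 < ω.re)
    (g : ℝ → ℂ) (hg : ContDiff ℝ 2 g)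
    (hode : ∀ z ∈ Set.Icc (0:ℝ) a, ω^2 * g z - (ν:ℂ) * deriv (deriv g) z = 1)
    (h0 : g 0 = 0) (hA : g a = 0) :
    ∫ z in (0:ℝ)..a, g z
      = ((a:ℂ) / ω^2) * (1 + 2 * (1 - Complex.cosh (ω * (a:ℂ) / (Real.sqrt ν : ℂ))) /
          ((ω * (a:ℂ) / (Real.sqrt ν : ℂ)) * Complex.sinh (ω * (a:ℂ) / (Real.sqrt ν : ℂ)))) := by
  set l : ℂ := ω / (Real.sqrt ν : ℂ)
  have hl_re : 0 < l.re := by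
    rw [div_ofReal_re]; positivity
  have hl : l ≠ 0 := fun h => by simp [h] at hl_re
  have hω0 : ω ≠ 0 := fun h => by simp [h] at hω
  have hνl : (ν : ℂ) * l ^ 2 = ω ^ 2 := by
    rw [div_pow, ← ofReal_pow, Real.sq_sqrt hν.le]
    field_simp [ofReal_ne_zero.mpr hν.ne']
  have hc : cosh (l * a / 2) ≠ 0 := by
    refine cosh_ne_zero_of_re_ne_zero (ne_of_gt ?_)
    simp only [div_ofNat_re, mul_re, ofReal_re, ofReal_im, mul_zero, sub_zero]
    positivity
  have key := mul_integral_eq_of_dirichlet_problem ha.le hl hc hg (by rwa [hνl]) h0 hA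
  rw [hνl] at key
  rw [show ω * (a : ℂ) / (Real.sqrt ν : ℂ) = 2 * (l * a / 2) by ring, mul_div_mul_comm,
    one_sub_cosh_two_mul_div_sinh_two_mul, ← mul_right_inj' (pow_ne_zero 2 hω0), key]
  field_simp [ofReal_ne_zero.mpr ha.ne']
  ring

theorem stmt_4 (a ν : ℝ) (ha : 0 < a) (hν : 0 < ν) (ω : ℂ) (hω : 0 < ω.re)
    (hspec : ∀ k : ℕ, ω^2 ≠ (↑(-(ν * (k:ℝ)^2 * Real.pi^2) / a^2) : ℂ))
    (g : ℝ → ℂ) (hg : ContDiff ℝ 2 g)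
    (hode : ∀ z ∈ Set.Icc (0:ℝ) a, ω^2 * g z - (ν:ℂ) * deriv (deriv g) z = 1)
    (h0 : g 0 = 0) (hA : g a = 0) :
    ∫ z in (0:ℝ)..a, g z
      = ((a:ℂ) / ω^2) * (1 + 2 * (1 - Complex.cosh (ω * (a:ℂ) / (Real.sqrt ν : ℂ))) /
          ((ω * (a:ℂ) / (Real.sqrt ν : ℂ)) * Complex.sinh (ω * (a:ℂ) / (Real.sqrt ν : ℂ)))) :=
  stmt_4_general a ν ha hν ω hω g hg hode h0 hA
end

section
/- Let σ ∈ (-1/2, 1/2), and for real parameters Ω ≥ 1 (playing the role of ⟨ω⟩) and Z ≥ 1 (playing the role of ⟨ζ⟩) with Z ≤ Ω, define M_σ(Ω,Z)^2 = Σ_{k≥1} 1/(k^2 (k^4 + Ω^4)(k^2 + Z^2)^σ). Then there exist constants C1, C2 > 0 depending only on σ such that C1 · Z^{-2σ}/Ω^4 ≤ M_σ(Ω,Z)^2 ≤ C2 · Z^{-2σ}/Ω^4 for all such Ω, Z. -/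
/-!
Since `Z² ≤ k² + Z² ≤ 2k²Z²` for `k, Z ≥ 1`, the weight `(k² + Z²)^(-σ)` is `Z^(-2σ)` up to a
factor `(2k²)^|σ|`, while `k²(k⁴ + Ω⁴) ≥ k²Ω⁴`. The terms are therefore dominated by
`2^|σ| Z^(-2σ) Ω^(-4) k^(2|σ| - 2)`, a convergent `p`-series exactly when `|σ| < 1/2`; the lower
bound is the term `k = 1` alone, where `1 + Ω⁴ ≤ 2Ω⁴` uses `Ω ≥ Z ≥ 1`.
-/

open Real

section RpowBetween

variable {a b c t : ℝ}

lemma rpow_le_rpow_mul_div_rpow_abs (ha : 0 < a) (hab : a ≤ b) (hbc : b ≤ c) :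
    b ^ t ≤ a ^ t * (c / a) ^ |t| := by
  have hb : 1 ≤ b / a := (one_le_div ha).2 hab
  calc b ^ t = a ^ t * (b / a) ^ t := by
        rw [← mul_rpow ha.le (hb.trans' zero_le_one), mul_div_cancel₀ _ ha.ne']
    _ ≤ a ^ t * (c / a) ^ |t| := by
        gcongr
        calc (b / a) ^ t ≤ (b / a) ^ |t| := rpow_le_rpow_of_exponent_le hb (le_abs_self t)
          _ ≤ (c / a) ^ |t| := by gcongr

lemma rpow_mul_div_rpow_neg_abs_le (ha : 0 < a) (hab : a ≤ b) (hbc : b ≤ c) :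
    a ^ t * (c / a) ^ (-|t|) ≤ b ^ t := by
  have hb : 1 ≤ b / a := (one_le_div ha).2 hab
  calc a ^ t * (c / a) ^ (-|t|) ≤ a ^ t * (b / a) ^ t := by
        gcongr
        calc (c / a) ^ (-|t|) ≤ (b / a) ^ (-|t|) :=
              rpow_le_rpow_of_nonpos (by positivity) (by gcongr) (by simp)
          _ ≤ (b / a) ^ t := rpow_le_rpow_of_exponent_le hb (neg_abs_le t)
    _ = b ^ t := by
        rw [← mul_rpow ha.le (hb.trans' zero_le_one), mul_div_cancel₀ _ ha.ne']

end RpowBetween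

lemma sq_rpow_neg {Z : ℝ} (hZ : 0 ≤ Z) (σ : ℝ) : (Z ^ 2) ^ (-σ) = Z ^ (-2 * σ) := by
  rw [← rpow_natCast, ← rpow_mul hZ]
  norm_num

lemma sq_add_sq_rpow_neg_le {x Z : ℝ} (hx : 1 ≤ x) (hZ : 1 ≤ Z) (σ : ℝ) :
    (x ^ 2 + Z ^ 2) ^ (-σ) ≤ 2 ^ |σ| * Z ^ (-2 * σ) * x ^ (2 * |σ|) := by
  have hx0 : 0 < x := by linarith
  have hZ0 : 0 < Z := by linarith
  have hupper : x ^ 2 + Z ^ 2 ≤ 2 * x ^ 2 * Z ^ 2 := by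
    nlinarith [mul_nonneg (sub_nonneg.2 (one_le_pow₀ (n := 2) hx))
      (sub_nonneg.2 (one_le_pow₀ (n := 2) hZ))]
  calc (x ^ 2 + Z ^ 2) ^ (-σ)
      ≤ (Z ^ 2) ^ (-σ) * (2 * x ^ 2 * Z ^ 2 / Z ^ 2) ^ |-σ| :=
        rpow_le_rpow_mul_div_rpow_abs (by positivity) (by nlinarith) hupper
    _ = 2 ^ |σ| * Z ^ (-2 * σ) * x ^ (2 * |σ|) := by
        rw [sq_rpow_neg hZ0.le, abs_neg, mul_div_cancel_right₀ _ (by positivity),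
          mul_rpow zero_le_two (by positivity), ← rpow_natCast x 2, ← rpow_mul hx0.le]
        push_cast
        ring

lemma rpow_neg_le_one_add_sq_rpow_neg {Z : ℝ} (hZ : 1 ≤ Z) (σ : ℝ) :
    2 ^ (-|σ|) * Z ^ (-2 * σ) ≤ (1 + Z ^ 2) ^ (-σ) := by
  have hZ0 : 0 < Z := by linarith
  calc 2 ^ (-|σ|) * Z ^ (-2 * σ) = (Z ^ 2) ^ (-σ) * (2 * Z ^ 2 / Z ^ 2) ^ (-|-σ|) := by
        rw [sq_rpow_neg hZ0.le, abs_neg, mul_div_cancel_right₀ _ (by positivity), mul_comm]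
    _ ≤ (1 + Z ^ 2) ^ (-σ) :=
        rpow_mul_div_rpow_neg_abs_le (by positivity) (by linarith) (by nlinarith)

lemma summable_nat_add_one_rpow {p : ℝ} (hp : p < -1) :
    Summable fun k : ℕ => ((k : ℝ) + 1) ^ p := by
  have h := (summable_nat_add_iff 1).2 (Real.summable_nat_rpow.2 hp)
  simpa using h

/-- `M_σ(Ω, Z)² = ∑' k, msqTerm σ Ω Z k`, with the index shifted so that `k = 0` is the paper's `k = 1`. -/
noncomputable def msqTerm (σ Ω Z : ℝ) (k : ℕ) : ℝ :=
  ((k + 1 : ℝ) ^ 2 + Z ^ 2) ^ (-σ) / ((k + 1 : ℝ) ^ 2 * ((k + 1 : ℝ) ^ 4 + Ω ^ 4))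

section msqTerm

variable {σ Ω Z : ℝ}

lemma msqTerm_nonneg (k : ℕ) : 0 ≤ msqTerm σ Ω Z k := by
  unfold msqTerm
  positivity

lemma msqTerm_le (hZ : 1 ≤ Z) (hΩ : 0 < Ω) (k : ℕ) :
    msqTerm σ Ω Z k ≤ 2 ^ |σ| * Z ^ (-2 * σ) / Ω ^ 4 * ((k : ℝ) + 1) ^ (2 * |σ| - 2) := by
  have hx : (1 : ℝ) ≤ k + 1 := by simp
  have hx0 : (0 : ℝ) < k + 1 := by positivity
  calc msqTerm σ Ω Z k
      ≤ 2 ^ |σ| * Z ^ (-2 * σ) * ((k : ℝ) + 1) ^ (2 * |σ|) / ((k + 1 : ℝ) ^ 2 * Ω ^ 4) := by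
        unfold msqTerm
        gcongr
        · exact sq_add_sq_rpow_neg_le hx hZ σ
        · exact le_add_of_nonneg_left (by positivity)
    _ = 2 ^ |σ| * Z ^ (-2 * σ) / Ω ^ 4 * ((k : ℝ) + 1) ^ (2 * |σ| - 2) := by
        rw [rpow_sub hx0, rpow_two]
        field_simp

lemma summable_msqTerm (hσ : |σ| < 1 / 2) (hZ : 1 ≤ Z) (hΩ : 0 < Ω) :
    Summable (msqTerm σ Ω Z) :=
  .of_nonneg_of_le msqTerm_nonneg (msqTerm_le hZ hΩ)
    ((summable_nat_add_one_rpow (by linarith)).mul_left _)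

lemma tsum_msqTerm_le (hσ : |σ| < 1 / 2) (hZ : 1 ≤ Z) (hΩ : 0 < Ω) :
    ∑' k, msqTerm σ Ω Z k ≤
      2 ^ |σ| * (∑' k : ℕ, ((k : ℝ) + 1) ^ (2 * |σ| - 2)) * Z ^ (-2 * σ) / Ω ^ 4 := by
  have hg := summable_nat_add_one_rpow (p := 2 * |σ| - 2) (by linarith)
  calc ∑' k, msqTerm σ Ω Z k
      ≤ ∑' k : ℕ, 2 ^ |σ| * Z ^ (-2 * σ) / Ω ^ 4 * ((k : ℝ) + 1) ^ (2 * |σ| - 2) :=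
        (summable_msqTerm hσ hZ hΩ).tsum_le_tsum (msqTerm_le hZ hΩ) (hg.mul_left _)
    _ = _ := by rw [tsum_mul_left]; ring

lemma le_tsum_msqTerm (hσ : |σ| < 1 / 2) (hZ : 1 ≤ Z) (hΩ : 1 ≤ Ω) :
    2 ^ (-|σ|) / 2 * Z ^ (-2 * σ) / Ω ^ 4 ≤ ∑' k, msqTerm σ Ω Z k := by
  have hΩ4 : 1 + Ω ^ 4 ≤ 2 * Ω ^ 4 := by linarith [one_le_pow₀ (n := 4) hΩ]
  calc 2 ^ (-|σ|) / 2 * Z ^ (-2 * σ) / Ω ^ 4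
      = 2 ^ (-|σ|) * Z ^ (-2 * σ) / (2 * Ω ^ 4) := by ring
    _ ≤ (1 + Z ^ 2) ^ (-σ) / (1 + Ω ^ 4) := by
        gcongr
        exact rpow_neg_le_one_add_sq_rpow_neg hZ σ
    _ = msqTerm σ Ω Z 0 := by simp [msqTerm]
    _ ≤ ∑' k, msqTerm σ Ω Z k :=
        (summable_msqTerm hσ hZ (by linarith)).le_tsum 0 fun k _ => msqTerm_nonneg k

end msqTerm

theorem stmt_7 (σ : ℝ) (hσ : σ ∈ Set.Ioo (-(1:ℝ)/2) (1/2)) :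
    ∃ C1 > 0, ∃ C2 > 0, ∀ Ω Z : ℝ, 1 ≤ Z → Z ≤ Ω →
      C1 * Z ^ (-2*σ) / Ω^4
          ≤ (∑' k : ℕ, ((k+1:ℝ)^2 + Z^2) ^ (-σ) / ((k+1:ℝ)^2 * ((k+1:ℝ)^4 + Ω^4))) ∧
      (∑' k : ℕ, ((k+1:ℝ)^2 + Z^2) ^ (-σ) / ((k+1:ℝ)^2 * ((k+1:ℝ)^4 + Ω^4)))
          ≤ C2 * Z ^ (-2*σ) / Ω^4 := by
  have hσ' : |σ| < 1 / 2 := abs_lt.2 ⟨by linarith [hσ.1], hσ.2⟩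
  set T := ∑' k : ℕ, ((k : ℝ) + 1) ^ (2 * |σ| - 2)
  have hT : 0 < T :=
    (summable_nat_add_one_rpow (by linarith)).tsum_pos (fun k => by positivity) 0 (by positivity)
  refine ⟨2 ^ (-|σ|) / 2, by positivity, 2 ^ |σ| * T, by positivity, fun Ω Z hZ hZΩ => ?_⟩
  exact ⟨le_tsum_msqTerm hσ' hZ (hZ.trans hZΩ), tsum_msqTerm_le hσ' hZ (by linarith)⟩
end

section
/- Let σ ∈ (-5/2, -1/2) and κ = (2σ+1)/(2σ) ∈ (0, 4/5). For real Ω ≥ 1, Z ≥ 1 with Z ≤ Ω and Z ≤ Ω^κ, define M_σ(Ω,Z)^2 = Σ_{k≥1} (k^2+Z^2)^{-σ}/(k^2(k^4+Ω^4)). Then there exist constants C1, C2 > 0 depending only on σ such that C1 · Ω^{-2σ-5} ≤ M_σ(Ω,Z)^2 ≤ C2 · Ω^{-2σ-5}. -/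
/-!
Write `s = -σ ∈ (1/2, 5/2)`, `x = k + 1` and `N = ⌊Ω⌋₊`. The `N` terms with `N ≤ k < 2N` have
`x ≍ Ω` and are each `≳ Ω^{2s-6}`, which gives the lower bound. For the upper bound,
`(x² + Z²)^s ≤ 2^s ((x²)^s + (Z²)^s)`. The `Z`-part is at most `(Z²)^s Ω⁻⁴ ∑ x⁻² = (π²/6) (Z²)^s Ω⁻⁴`,
and `Z ≤ Ω^κ` says exactly `(Z²)^s ≤ Ω^{2s-1}`. In the remaining sum of `x^{2s-2} / (x⁴ + Ω⁴)`,
the terms with `k < N` are at most `x^{2s-2} Ω⁻⁴` and add up to `≲ N^{2s-1} Ω⁻⁴` since `2s - 2 > -1`,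
while the terms with `k ≥ N` are at most `x^{2s-6}` and, by the integral test, add up to
`≲ N^{2s-5}` since `2s - 6 < -1`.
-/

open Real Finset

lemma mul_rpow_sub_one_le_rpow_sub_rpow {p x : ℝ} (hp0 : 0 ≤ p) (hp1 : p ≤ 1) (hx : 1 ≤ x) :
    p * x ^ (p - 1) ≤ x ^ p - (x - 1) ^ p := by
  have hx0 : 0 < x := by linarith
  have hx1 : -1 ≤ -x⁻¹ := by linarith [inv_le_one_of_one_le₀ hx]
  have hbern : (1 + -x⁻¹) ^ p ≤ 1 + p * -x⁻¹ := rpow_one_add_le_one_add_mul_self hx1 hp0 hp1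
  have hfac : x - 1 = x * (1 + -x⁻¹) := by field_simp; ring
  have hinv : x ^ p * x⁻¹ = x ^ (p - 1) := by rw [rpow_sub_one hx0.ne', div_eq_mul_inv]
  calc p * x ^ (p - 1) = x ^ p - x ^ p * (1 + p * -x⁻¹) := by rw [← hinv]; ring
    _ ≤ x ^ p - x ^ p * (1 + -x⁻¹) ^ p := by gcongr
    _ = x ^ p - (x - 1) ^ p := by rw [hfac, mul_rpow hx0.le (by linarith)]

lemma sum_range_rpow_le_of_nonpos {q : ℝ} (hq1 : -1 < q) (hq0 : q ≤ 0) (N : ℕ) :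
    ∑ k ∈ range N, ((k : ℝ) + 1) ^ q ≤ (N : ℝ) ^ (q + 1) / (q + 1) := by
  have hp : 0 < q + 1 := by linarith
  induction N with
  | zero => simp [zero_rpow hp.ne']
  | succ N ih =>
    have hstep := mul_rpow_sub_one_le_rpow_sub_rpow hp.le (by linarith)
      (le_add_of_nonneg_left N.cast_nonneg : (1 : ℝ) ≤ N + 1)
    rw [add_sub_cancel_right, add_sub_cancel_right] at hstep
    rw [sum_range_succ, Nat.cast_succ, le_div_iff₀ hp] at *
    linarith

lemma sum_range_rpow_le {q : ℝ} (hq : -1 < q) (N : ℕ) :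
    ∑ k ∈ range N, ((k : ℝ) + 1) ^ q ≤ (1 + 1 / (q + 1)) * (N : ℝ) ^ (q + 1) := by
  have hp : 0 < q + 1 := by linarith
  rcases le_total q 0 with hq0 | hq0
  · calc _ ≤ (N : ℝ) ^ (q + 1) / (q + 1) := sum_range_rpow_le_of_nonpos hq hq0 N
      _ ≤ _ := by rw [div_eq_mul_inv, mul_comm, one_div]; gcongr; linarith
  · calc _ ≤ ∑ _k ∈ range N, (N : ℝ) ^ q := by
          refine sum_le_sum fun k hk => rpow_le_rpow (by positivity) ?_ hq0
          exact_mod_cast mem_range.mp hk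
      _ = (N : ℝ) ^ (q + 1) := by
          rcases N.eq_zero_or_pos with rfl | hN0
          · simp [zero_rpow hp.ne']
          · rw [sum_const, card_range, nsmul_eq_mul, rpow_add_one (by positivity), mul_comm]
      _ ≤ _ := le_mul_of_one_le_left (by positivity) (le_add_of_nonneg_right (by positivity))

lemma tsum_rpow_nat_add_le {q : ℝ} (hq : q < -1) {N : ℕ} (hN : 0 < N) :
    ∑' n : ℕ, ((n + N + 1 : ℕ) : ℝ) ^ q ≤ (N : ℝ) ^ (q + 1) / (-(q + 1)) := by
  have hN' : (0 : ℝ) < N := by exact_mod_cast hN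
  have hanti : AntitoneOn (fun x : ℝ => x ^ q) (Set.Ici (N : ℝ)) := fun x hx _ _ hxy =>
    rpow_le_rpow_of_nonpos (hN'.trans_le hx) hxy (by linarith)
  calc _ ≤ ∫ x in Set.Ioi (N : ℝ), x ^ q :=
        hanti.tsum_comp_add_le_integral N (integrableOn_Ioi_rpow_of_lt hq hN')
          fun x hx => rpow_nonneg (hN'.trans hx).le q
    _ = _ := by rw [integral_Ioi_rpow_of_lt hq hN', neg_div, div_neg]

lemma div_two_le_natFloor {x : ℝ} (hx : 1 ≤ x) : x / 2 ≤ ⌊x⌋₊ := by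
  have h1 : (1 : ℝ) ≤ ⌊x⌋₊ := by exact_mod_cast Nat.le_floor (by exact_mod_cast hx)
  linarith [Nat.lt_floor_add_one x]

lemma rpow_div_pow_four_add_le {x : ℝ} (hx : 0 < x) (q Ω : ℝ) :
    x ^ q / (x ^ 4 + Ω ^ 4) ≤ x ^ (q - 4) :=
  calc _ ≤ x ^ q / x ^ 4 := by gcongr; exact le_add_of_nonneg_right (by positivity)
    _ = _ := by exact_mod_cast (rpow_sub_natCast hx.ne' q 4).symm

lemma summable_rpow_div_pow_four_add {q : ℝ} (hq : q < 3) (Ω : ℝ) :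
    Summable fun k : ℕ => ((k : ℝ) + 1) ^ q / (((k : ℝ) + 1) ^ 4 + Ω ^ 4) := by
  have hsum : Summable fun k : ℕ => ((k + 1 : ℕ) : ℝ) ^ (q - 4) :=
    (summable_nat_add_iff 1).2 (summable_nat_rpow.2 (by linarith))
  refine hsum.of_nonneg_of_le (fun k => by positivity) fun k => ?_
  push_cast
  exact rpow_div_pow_four_add_le (by positivity) q Ω

lemma tsum_rpow_div_pow_four_add_le {q Ω : ℝ} (hq1 : -1 < q) (hq3 : q < 3) (hΩ : 1 ≤ Ω) :
    ∑' k : ℕ, ((k : ℝ) + 1) ^ q / (((k : ℝ) + 1) ^ 4 + Ω ^ 4)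
      ≤ (1 + 1 / (q + 1) + 2 ^ (3 - q) / (3 - q)) * Ω ^ (q - 3) := by
  set N := ⌊Ω⌋₊
  have hΩ0 : 0 < Ω := by linarith
  have hN : 0 < N := Nat.floor_pos.2 hΩ
  have head : ∑ k ∈ range N, ((k : ℝ) + 1) ^ q / (((k : ℝ) + 1) ^ 4 + Ω ^ 4)
      ≤ (1 + 1 / (q + 1)) * Ω ^ (q - 3) :=
    calc _ ≤ ∑ k ∈ range N, ((k : ℝ) + 1) ^ q / Ω ^ 4 := by
          gcongr with k; exact le_add_of_nonneg_left (by positivity)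
      _ ≤ (1 + 1 / (q + 1)) * (N : ℝ) ^ (q + 1) / Ω ^ 4 := by
          rw [← sum_div]; gcongr; exact sum_range_rpow_le hq1 N
      _ ≤ (1 + 1 / (q + 1)) * Ω ^ (q + 1) / Ω ^ 4 := by
          have : 0 < q + 1 := by linarith
          gcongr; exact Nat.floor_le hΩ0.le
      _ = _ := by
          rw [mul_div_assoc, show q - 3 = q + 1 - (4 : ℕ) by push_cast; ring,
            rpow_sub_natCast hΩ0.ne']
  have hsum : Summable fun k : ℕ => ((k + N + 1 : ℕ) : ℝ) ^ (q - 4) := by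
    simpa only [← add_assoc] using (summable_nat_add_iff (N + 1)).2
      (summable_nat_rpow.2 (show q - 4 < -1 by linarith))
  have tail : ∑' k : ℕ, (((k + N : ℕ) : ℝ) + 1) ^ q / ((((k + N : ℕ) : ℝ) + 1) ^ 4 + Ω ^ 4)
      ≤ 2 ^ (3 - q) / (3 - q) * Ω ^ (q - 3) :=
    calc _ ≤ ∑' k : ℕ, ((k + N + 1 : ℕ) : ℝ) ^ (q - 4) := by
          refine Summable.tsum_le_tsum (fun k => ?_)
            ((summable_nat_add_iff N).2 (summable_rpow_div_pow_four_add hq3 Ω)) hsum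
          push_cast
          exact rpow_div_pow_four_add_le (by positivity) q Ω
      _ ≤ (N : ℝ) ^ (q - 3) / (3 - q) := by
          rw [show q - 3 = q - 4 + 1 by ring, show 3 - q = -(q - 4 + 1) by ring]
          exact tsum_rpow_nat_add_le (by linarith) hN
      _ ≤ (Ω / 2) ^ (q - 3) / (3 - q) := by
          refine div_le_div_of_nonneg_right ?_ (by linarith)
          exact rpow_le_rpow_of_nonpos (by positivity) (div_two_le_natFloor hΩ) (by linarith)
      _ = _ := by
          rw [div_rpow hΩ0.le zero_le_two, div_eq_mul_inv _ ((2:ℝ) ^ _), ← rpow_neg zero_le_two,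
            neg_sub]
          ring
  rw [← (summable_rpow_div_pow_four_add hq3 Ω).sum_add_tsum_nat_add N]
  linarith

lemma hasSum_one_div_nat_add_one_sq :
    HasSum (fun k : ℕ => 1 / ((k : ℝ) + 1) ^ 2) (π ^ 2 / 6) := by
  simpa using (hasSum_nat_add_iff' 1).2 hasSum_zeta_two

lemma add_rpow_le_two_rpow_mul_rpow_add_rpow {a b p : ℝ} (ha : 0 ≤ a) (hb : 0 ≤ b) (hp : 0 ≤ p) :
    (a + b) ^ p ≤ 2 ^ p * (a ^ p + b ^ p) :=
  calc (a + b) ^ p ≤ (2 * max a b) ^ p := by rw [two_mul]; gcongr <;> simp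
    _ = 2 ^ p * max a b ^ p := mul_rpow zero_le_two (le_max_of_le_left ha)
    _ ≤ 2 ^ p * (a ^ p + b ^ p) := by
      gcongr
      rcases le_total a b with h | h
      · rw [max_eq_right h]; exact le_add_of_nonneg_left (rpow_nonneg ha p)
      · rw [max_eq_left h]; exact le_add_of_nonneg_right (rpow_nonneg hb p)

lemma sq_rpow_div_sq {x : ℝ} (hx : 0 < x) (s : ℝ) : (x ^ 2) ^ s / x ^ 2 = x ^ (2 * s - 2) := by
  rw [← rpow_natCast_mul hx.le]
  exact_mod_cast (rpow_sub_natCast hx.ne' _ 2).symm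

/-- The `k`-th summand of `M_σ(Ω, Z)²`, indexed from `0` and written with `s = -σ`. -/
noncomputable def summand (s Ω Z : ℝ) (k : ℕ) : ℝ :=
  (((k : ℝ) + 1) ^ 2 + Z ^ 2) ^ s / (((k : ℝ) + 1) ^ 2 * (((k : ℝ) + 1) ^ 4 + Ω ^ 4))

lemma summand_nonneg (s Ω Z : ℝ) (k : ℕ) : 0 ≤ summand s Ω Z k := by
  unfold summand; positivity

lemma summand_le {s Ω : ℝ} (hs : 0 ≤ s) (hΩ : 0 < Ω) (Z : ℝ) (k : ℕ) :
    summand s Ω Z k ≤ 2 ^ s * (((k : ℝ) + 1) ^ (2 * s - 2) / (((k : ℝ) + 1) ^ 4 + Ω ^ 4)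
      + (Z ^ 2) ^ s / Ω ^ 4 * (1 / ((k : ℝ) + 1) ^ 2)) := by
  set x : ℝ := k + 1
  have hx : 0 < x := by positivity
  calc summand s Ω Z k ≤ 2 ^ s * ((x ^ 2) ^ s + (Z ^ 2) ^ s) / (x ^ 2 * (x ^ 4 + Ω ^ 4)) := by
        unfold summand
        gcongr
        exact add_rpow_le_two_rpow_mul_rpow_add_rpow (by positivity) (by positivity) hs
    _ = 2 ^ s * ((x ^ 2) ^ s / x ^ 2 / (x ^ 4 + Ω ^ 4)
          + (Z ^ 2) ^ s / (x ^ 2 * (x ^ 4 + Ω ^ 4))) := by rw [div_div, ← add_div, mul_div_assoc]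
    _ ≤ _ := by
      rw [sq_rpow_div_sq hx]
      gcongr
      rw [div_mul_div_comm, mul_one, mul_comm]
      gcongr
      exact le_add_of_nonneg_left (by positivity)

lemma exists_tsum_summand_le {s : ℝ} (hs1 : 1 / 2 < s) (hs5 : s < 5 / 2) :
    ∃ C > 0, ∀ Ω Z : ℝ, 1 ≤ Ω → (Z ^ 2) ^ s ≤ Ω ^ (2 * s - 1) →
      Summable (summand s Ω Z) ∧ ∑' k, summand s Ω Z k ≤ C * Ω ^ (2 * s - 5) := by
  set C₀ := 1 + 1 / (2 * s - 2 + 1) + 2 ^ (3 - (2 * s - 2)) / (3 - (2 * s - 2))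
  have hC₀ : 0 < C₀ := by
    have : 0 < 2 * s - 2 + 1 := by linarith
    have : 0 < 3 - (2 * s - 2) := by linarith
    positivity
  refine ⟨2 ^ s * (C₀ + π ^ 2 / 6), by positivity, fun Ω Z hΩ hZ => ?_⟩
  have hΩ0 : 0 < Ω := by linarith
  have hbound := ((summable_rpow_div_pow_four_add (q := 2 * s - 2) (by linarith) Ω).hasSum.add
    (hasSum_one_div_nat_add_one_sq.mul_left ((Z ^ 2) ^ s / Ω ^ 4))).mul_left (2 ^ s)
  have hle := summand_le (by linarith : 0 ≤ s) hΩ0 Z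
  have hsum : Summable (summand s Ω Z) :=
    hbound.summable.of_nonneg_of_le (summand_nonneg s Ω Z) hle
  refine ⟨hsum, (hasSum_le hle hsum.hasSum hbound).trans ?_⟩
  have hZ' : (Z ^ 2) ^ s / Ω ^ 4 ≤ Ω ^ (2 * s - 5) := by
    calc _ ≤ Ω ^ (2 * s - 1) / Ω ^ 4 := by gcongr
      _ = _ := by
        rw [show 2 * s - 5 = 2 * s - 1 - (4 : ℕ) by push_cast; ring, rpow_sub_natCast hΩ0.ne']
  have hg := tsum_rpow_div_pow_four_add_le (q := 2 * s - 2) (by linarith) (by linarith) hΩ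
  rw [show 2 * s - 2 - 3 = 2 * s - 5 by ring] at hg
  rw [mul_assoc]
  gcongr 2 ^ s * ?_
  calc _ ≤ C₀ * Ω ^ (2 * s - 5) + Ω ^ (2 * s - 5) * (π ^ 2 / 6) := by gcongr
    _ = _ := by ring

lemma le_tsum_summand {s Ω : ℝ} (hs : 0 ≤ s) (hΩ : 1 ≤ Ω) {Z : ℝ}
    (hsum : Summable (summand s Ω Z)) : Ω ^ (2 * s - 5) / 136 ≤ ∑' k, summand s Ω Z k := by
  set N := ⌊Ω⌋₊
  have hΩ0 : 0 < Ω := by linarith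
  have hterm : ∀ k ∈ Ico N (2 * N), Ω ^ (2 * s) / (68 * Ω ^ 6) ≤ summand s Ω Z k := by
    intro k hk
    rw [mem_Ico] at hk
    have hxΩ : Ω ≤ (k : ℝ) + 1 := by
      have : (N : ℝ) ≤ k := by exact_mod_cast hk.1
      linarith [Nat.lt_floor_add_one Ω]
    have hx2Ω : (k : ℝ) + 1 ≤ 2 * Ω := by
      have : (k : ℝ) + 1 ≤ 2 * N := by exact_mod_cast hk.2
      linarith [Nat.floor_le hΩ0.le]
    have hnum : Ω ^ (2 * s) ≤ (((k : ℝ) + 1) ^ 2 + Z ^ 2) ^ s := by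
      rw [show 2 * s = ((2 : ℕ) : ℝ) * s by norm_num, rpow_natCast_mul hΩ0.le]
      gcongr
      nlinarith [sq_nonneg Z]
    have hden : ((k : ℝ) + 1) ^ 2 * (((k : ℝ) + 1) ^ 4 + Ω ^ 4) ≤ 68 * Ω ^ 6 :=
      calc _ ≤ (2 * Ω) ^ 2 * ((2 * Ω) ^ 4 + Ω ^ 4) := by gcongr
        _ = 68 * Ω ^ 6 := by ring
    exact div_le_div₀ (by positivity) hnum (by positivity) hden
  calc Ω ^ (2 * s - 5) / 136 = Ω / 2 * (Ω ^ (2 * s) / (68 * Ω ^ 6)) := by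
        rw [show 2 * s - 5 = 2 * s - (5 : ℕ) by push_cast; ring, rpow_sub_natCast hΩ0.ne']
        field_simp
        ring
    _ ≤ N * (Ω ^ (2 * s) / (68 * Ω ^ 6)) := by gcongr; exact div_two_le_natFloor hΩ
    _ ≤ ∑ k ∈ Ico N (2 * N), summand s Ω Z k := by
        have := card_nsmul_le_sum _ _ _ hterm
        rwa [Nat.card_Ico, show 2 * N - N = N by omega, nsmul_eq_mul] at this
    _ ≤ ∑' k, summand s Ω Z k := hsum.sum_le_tsum _ fun k _ => summand_nonneg s Ω Z k

lemma sq_rpow_neg_le_of_le_rpow {σ Ω Z : ℝ} (hσ : σ < 0) (hΩ : 0 ≤ Ω) (hZ : 0 ≤ Z)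
    (hZκ : Z ≤ Ω ^ ((2 * σ + 1) / (2 * σ))) : (Z ^ 2) ^ (-σ) ≤ Ω ^ (2 * -σ - 1) :=
  calc (Z ^ 2) ^ (-σ) = Z ^ (2 * -σ) := by
        rw [← rpow_natCast_mul hZ]; norm_num
    _ ≤ (Ω ^ ((2 * σ + 1) / (2 * σ))) ^ (2 * -σ) := by gcongr; linarith
    _ = Ω ^ (2 * -σ - 1) := by
        rw [← rpow_mul hΩ]; congr 1; field_simp [hσ.ne]; ring

theorem stmt_8 (σ : ℝ) (hσ : σ ∈ Set.Ioo (-(5:ℝ)/2) (-(1:ℝ)/2)) :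
    ∃ C1 > 0, ∃ C2 > 0, ∀ Ω Z : ℝ, 1 ≤ Ω → 1 ≤ Z → Z ≤ Ω →
      Z ≤ Ω ^ ((2*σ+1)/(2*σ)) →
      C1 * Ω ^ (-2*σ-5)
          ≤ (∑' k : ℕ, ((k+1:ℝ)^2 + Z^2) ^ (-σ) / ((k+1:ℝ)^2 * ((k+1:ℝ)^4 + Ω^4))) ∧
      (∑' k : ℕ, ((k+1:ℝ)^2 + Z^2) ^ (-σ) / ((k+1:ℝ)^2 * ((k+1:ℝ)^4 + Ω^4)))
          ≤ C2 * Ω ^ (-2*σ-5) := by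
  obtain ⟨hσ5, hσ1⟩ := hσ
  obtain ⟨C, hC, hupper⟩ := exists_tsum_summand_le (s := -σ) (by linarith) (by linarith)
  refine ⟨1 / 136, by norm_num, C, hC, fun Ω Z hΩ hZ _ hZκ => ?_⟩
  obtain ⟨hsum, hle⟩ := hupper Ω Z hΩ
    (sq_rpow_neg_le_of_le_rpow (by linarith) (by linarith) (by linarith) hZκ)
  rw [show -2 * σ - 5 = 2 * -σ - 5 by ring, one_div_mul_eq_div]
  exact ⟨le_tsum_summand (by linarith) hΩ hsum, hle⟩
end

section
/- For s ∈ (0, 1/2) and Z ≥ 1, the series Σ_{k≥1} (1 + k^2 + Z^2)^s / k^2 is comparable to Z^{2s}: there exist constants C1, C2 > 0 depending only on s with C1 Z^{2s} ≤ Σ_{k≥1} (1+k^2+Z^2)^s/k^2 ≤ C2 Z^{2s}. -/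
theorem stmt_9 (s : ℝ) (hs : s ∈ Set.Ioo (0:ℝ) (1/2)) :
    ∃ C1 > 0, ∃ C2 > 0, ∀ Z : ℝ, 1 ≤ Z →
      C1 * Z ^ (2*s) ≤ (∑' k : ℕ, (1 + (k+1:ℝ)^2 + Z^2) ^ s / (k+1:ℝ)^2) ∧
      (∑' k : ℕ, (1 + (k+1:ℝ)^2 + Z^2) ^ s / (k+1:ℝ)^2) ≤ C2 * Z ^ (2*s) := by
  obtain ⟨hs0, hs1⟩ := hs
  have hexp : 2*s - 2 < -1 := by linarith
  have hS : Summable (fun k : ℕ => ((k:ℝ)+1) ^ (2*s-2)) := by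
    have h1 := (Real.summable_nat_rpow (p := 2*s-2)).mpr hexp
    have h2 := (summable_nat_add_iff 1).mpr h1
    simpa using h2
  have hSpos : 0 < ∑' k : ℕ, ((k:ℝ)+1) ^ (2*s-2) :=
    Summable.tsum_pos hS (fun i => by positivity) 0 (by positivity)
  refine ⟨1, one_pos, (3:ℝ)^s * ∑' k : ℕ, ((k:ℝ)+1) ^ (2*s-2), by positivity,
    fun Z hZ => ?_⟩
  have hZ0 : (0:ℝ) < Z := lt_of_lt_of_le one_pos hZ
  have hZ2s : Z ^ (2*s) = (Z^2) ^ s := by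
    rw [← Real.rpow_natCast Z 2, ← Real.rpow_mul hZ0.le]; norm_num
  have key : ∀ k : ℕ, (1 + ((k:ℕ)+1:ℝ)^2 + Z^2) ^ s / ((k:ℕ)+1:ℝ)^2
      ≤ (3:ℝ)^s * ((k:ℝ)+1) ^ (2*s-2) * Z ^ (2*s) := by
    intro k
    have hk0 : (0:ℝ) ≤ (k:ℝ) := Nat.cast_nonneg k
    have hk1 : (1:ℝ) ≤ (k:ℝ)+1 := by linarith
    have hkpos : (0:ℝ) < (k:ℝ)+1 := by linarith
    have harg : 1 + ((k:ℝ)+1)^2 + Z^2 ≤ 3 * (((k:ℝ)+1)^2 * Z^2) := by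
      nlinarith [sq_nonneg ((k:ℝ)+1 - 1), sq_nonneg (Z-1), sq_nonneg ((k:ℝ)+1),
        mul_pos (mul_pos hkpos hkpos) (mul_pos hZ0 hZ0)]
    have hpow : (1 + ((k:ℝ)+1)^2 + Z^2) ^ s
        ≤ (3:ℝ)^s * ((k:ℝ)+1)^(2*s) * Z^(2*s) := by
      have h1 : (1 + ((k:ℝ)+1)^2 + Z^2) ^ s ≤ (3 * (((k:ℝ)+1)^2 * Z^2)) ^ s :=
        Real.rpow_le_rpow (by positivity) harg hs0.le
      have h2 : (3 * (((k:ℝ)+1)^2 * Z^2)) ^ s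
          = (3:ℝ)^s * (((k:ℝ)+1)^2)^s * ((Z:ℝ)^2)^s := by
        rw [Real.mul_rpow (by norm_num) (by positivity),
          Real.mul_rpow (by positivity) (by positivity), mul_assoc]
      have h3 : (((k:ℝ)+1)^2)^s = ((k:ℝ)+1)^(2*s) := by
        rw [← Real.rpow_natCast ((k:ℝ)+1) 2, ← Real.rpow_mul hkpos.le]; norm_num
      calc (1 + ((k:ℝ)+1)^2 + Z^2) ^ s ≤ (3 * (((k:ℝ)+1)^2 * Z^2)) ^ s := h1
        _ = (3:ℝ)^s * ((k:ℝ)+1)^(2*s) * Z^(2*s) := by rw [h2, h3, ← hZ2s]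
    rw [div_le_iff₀ (by positivity)]
    calc (1 + ((k:ℝ)+1)^2 + Z^2) ^ s ≤ (3:ℝ)^s * ((k:ℝ)+1)^(2*s) * Z^(2*s) := hpow
      _ = (3:ℝ)^s * ((k:ℝ)+1)^(2*s-2) * Z^(2*s) * ((k:ℝ)+1)^2 := by
          have hsplit : ((k:ℝ)+1)^(2*s) = ((k:ℝ)+1)^(2*s-2) * ((k:ℝ)+1)^2 := by
            rw [← Real.rpow_natCast ((k:ℝ)+1) 2, ← Real.rpow_add hkpos]; norm_num
          rw [hsplit]; ring
  have hg : Summable (fun k : ℕ =>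
      (3:ℝ)^s * ((k:ℝ)+1) ^ (2*s-2) * Z ^ (2*s)) :=
    (hS.mul_left ((3:ℝ)^s)).mul_right (Z ^ (2*s))
  have hf : Summable (fun k : ℕ => (1 + ((k:ℕ)+1:ℝ)^2 + Z^2) ^ s / ((k:ℕ)+1:ℝ)^2) :=
    Summable.of_nonneg_of_le (fun k => by positivity) key hg
  constructor
  · have h0 : Z ^ (2*s) ≤ (1 + ((0:ℕ)+1:ℝ)^2 + Z^2) ^ s / ((0:ℕ)+1:ℝ)^2 := by
      rw [hZ2s]
      have : (Z:ℝ)^2 ≤ 1 + ((0:ℕ)+1:ℝ)^2 + Z^2 := by norm_num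
      calc ((Z:ℝ)^2)^s ≤ (1 + ((0:ℕ)+1:ℝ)^2 + Z^2)^s :=
            Real.rpow_le_rpow (by positivity) this hs0.le
        _ = (1 + ((0:ℕ)+1:ℝ)^2 + Z^2) ^ s / ((0:ℕ)+1:ℝ)^2 := by norm_num
    calc 1 * Z ^ (2*s) = Z ^ (2*s) := one_mul _
      _ ≤ (1 + ((0:ℕ)+1:ℝ)^2 + Z^2) ^ s / ((0:ℕ)+1:ℝ)^2 := h0
      _ ≤ ∑' k : ℕ, (1 + ((k:ℕ)+1:ℝ)^2 + Z^2) ^ s / ((k:ℕ)+1:ℝ)^2 :=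
          Summable.le_tsum hf 0 (fun i _ => by positivity)
  · calc (∑' k : ℕ, (1 + ((k:ℕ)+1:ℝ)^2 + Z^2) ^ s / ((k:ℕ)+1:ℝ)^2)
        ≤ ∑' k : ℕ, (3:ℝ)^s * ((k:ℝ)+1) ^ (2*s-2) * Z ^ (2*s) :=
          Summable.tsum_le_tsum key hf hg
      _ = (3:ℝ)^s * (∑' k : ℕ, ((k:ℝ)+1) ^ (2*s-2)) * Z ^ (2*s) := by
          rw [tsum_mul_right, tsum_mul_left]
end

section
/- For s ∈ (0, 1/2) and Z ≥ 1, the series Σ_{k≥1} 1/(k^2 (1+k^2+Z^2)^s) is comparable to Z^{-2s}: there exist C1, C2 > 0 depending only on s with C1 Z^{-2s} ≤ Σ_{k≥1} 1/(k^2(1+k^2+Z^2)^s) ≤ C2 Z^{-2s}. -/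
/-! Since `Z ^ 2 ≤ 1 + k ^ 2 + Z ^ 2`, each term is at most `Z ^ (-2 s) / k ^ 2`, so the series is
at most `ζ(2) Z ^ (-2 s)`. Conversely the series dominates its first term
`(2 + Z ^ 2) ^ (-s) ≥ (3 Z ^ 2) ^ (-s) = 3 ^ (-s) Z ^ (-2 s)`. -/

open Real

lemma hasSum_one_div_succ_sq : HasSum (fun k : ℕ => 1 / ((k + 1 : ℝ)) ^ 2) (π ^ 2 / 6) := by
  have h := (hasSum_nat_add_iff' 1).mpr hasSum_zeta_two
  simpa using h

lemma rpow_neg_two_mul {Z : ℝ} (hZ : 0 ≤ Z) (s : ℝ) : Z ^ (-2 * s) = (Z ^ 2) ^ (-s) := by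
  rw [← rpow_natCast Z 2, ← rpow_mul hZ]
  norm_num

lemma one_div_sq_mul_rpow_le {s Z : ℝ} (hs : 0 ≤ s) (hZ : 0 < Z) (x : ℝ) :
    1 / (x ^ 2 * (1 + x ^ 2 + Z ^ 2) ^ s) ≤ Z ^ (-2 * s) * (1 / x ^ 2) := by
  have hZ2 : 0 < Z ^ 2 := by positivity
  have hbase : Z ^ 2 ≤ 1 + x ^ 2 + Z ^ 2 := by nlinarith [sq_nonneg x]
  calc 1 / (x ^ 2 * (1 + x ^ 2 + Z ^ 2) ^ s)
      = (1 + x ^ 2 + Z ^ 2) ^ (-s) * (1 / x ^ 2) := by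
        rw [rpow_neg (by positivity)]
        field_simp
    _ ≤ Z ^ (-2 * s) * (1 / x ^ 2) := by
        rw [rpow_neg_two_mul hZ.le]
        exact mul_le_mul_of_nonneg_right (rpow_le_rpow_of_nonpos hZ2 hbase (neg_nonpos.mpr hs))
          (by positivity)

lemma three_rpow_neg_mul_rpow_le_one_div_two_add_sq {s Z : ℝ} (hs : 0 ≤ s) (hZ : 1 ≤ Z) :
    (3 : ℝ) ^ (-s) * Z ^ (-2 * s) ≤ 1 / (2 + Z ^ 2) ^ s := by
  have hZ2 : 0 < Z ^ 2 := by positivity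
  calc (3 : ℝ) ^ (-s) * Z ^ (-2 * s) = (3 * Z ^ 2) ^ (-s) := by
        rw [mul_rpow (by norm_num) hZ2.le, rpow_neg_two_mul (by linarith)]
    _ ≤ (2 + Z ^ 2) ^ (-s) := rpow_le_rpow_of_nonpos (by positivity) (by nlinarith) (by linarith)
    _ = 1 / (2 + Z ^ 2) ^ s := by rw [rpow_neg (by positivity), one_div]

theorem stmt_10 (s : ℝ) (hs : s ∈ Set.Ioo (0:ℝ) (1/2)) :
    ∃ C1 > 0, ∃ C2 > 0, ∀ Z : ℝ, 1 ≤ Z →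
      C1 * Z ^ (-2*s) ≤ (∑' k : ℕ, 1 / ((k+1:ℝ)^2 * (1 + (k+1:ℝ)^2 + Z^2) ^ s)) ∧
      (∑' k : ℕ, 1 / ((k+1:ℝ)^2 * (1 + (k+1:ℝ)^2 + Z^2) ^ s)) ≤ C2 * Z ^ (-2*s) := by
  refine ⟨3 ^ (-s), by positivity, π ^ 2 / 6, by positivity, fun Z hZ => ?_⟩
  have hZ0 : 0 < Z := by linarith
  have hterm (k : ℕ) := one_div_sq_mul_rpow_le hs.1.le hZ0 (k + 1)
  have hsum : Summable fun k : ℕ => 1 / ((k+1:ℝ)^2 * (1 + (k+1:ℝ)^2 + Z^2) ^ s) :=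
    (hasSum_one_div_succ_sq.summable.mul_left _).of_nonneg_of_le (fun _ => by positivity) hterm
  constructor
  · calc 3 ^ (-s) * Z ^ (-2 * s) ≤ 1 / (2 + Z ^ 2) ^ s :=
          three_rpow_neg_mul_rpow_le_one_div_two_add_sq hs.1.le hZ
      _ = 1 / (((0 : ℕ) + 1 : ℝ) ^ 2 * (1 + ((0 : ℕ) + 1 : ℝ) ^ 2 + Z ^ 2) ^ s) := by norm_num
      _ ≤ _ := hsum.le_tsum 0 fun _ _ => by positivity
  · calc _ ≤ ∑' k : ℕ, Z ^ (-2 * s) * (1 / ((k + 1 : ℝ)) ^ 2) :=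
          hsum.tsum_le_tsum hterm (hasSum_one_div_succ_sq.summable.mul_left _)
      _ = π ^ 2 / 6 * Z ^ (-2 * s) := by
          rw [tsum_mul_left, hasSum_one_div_succ_sq.tsum_eq, mul_comm]
end

section
/- With the same hypotheses as the previous statement (|ω² + νk²π²/a²| ≥ C0(Ω²+k²) for all k ≥ 1, and Z ≤ Ω), the resolvent also gains two derivatives: Σ_k (1+νk²+νZ²)^{σ+2} |g_k|² ≤ C Σ_k (1+νk²+νZ²)^σ |f_k|², i.e., ||g||_{σ+2,Z} ≤ C ||f||_{σ,Z}, with C depending only on C0 and ν. -/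
/-!
The estimate holds term by term. Since `Z ≤ Ω` and `1 ≤ Ω`, the weight `1 + νk² + νZ²` is at most
`(1 + ν)(Ω² + k²)`, hence by the resolvent bound at most `(1 + ν)/C0` times the modulus of the
denominator `ω² + νk²π²/a²`. So dividing by that denominator buys two powers of the weight at the
price of the constant `((1 + ν)/C0)²`.
-/

lemma one_add_mul_sq_add_mul_sq_le {ν Ω Z : ℝ} (hν : 0 ≤ ν) (hΩ : 1 ≤ Ω) (hZ : 0 ≤ Z)
    (hZΩ : Z ≤ Ω) (t : ℝ) :
    1 + ν * t ^ 2 + ν * Z ^ 2 ≤ (1 + ν) * (Ω ^ 2 + t ^ 2) := by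
  have hΩ2 : 1 ≤ Ω ^ 2 := one_le_pow₀ hΩ
  have hZ2 : Z ^ 2 ≤ Ω ^ 2 := pow_le_pow_left₀ hZ hZΩ 2
  nlinarith [sq_nonneg t]

lemma rpow_add_two_mul_norm_div_sq_le {𝕜 : Type*} [NormedDivisionRing 𝕜] {x M : ℝ} {d : 𝕜}
    (hx : 0 < x) (hxd : x ≤ M * ‖d‖) (σ : ℝ) (g : 𝕜) :
    x ^ (σ + 2) * ‖g / d‖ ^ 2 ≤ M ^ 2 * (x ^ σ * ‖g‖ ^ 2) := by
  have hd : 0 < ‖d‖ := (norm_nonneg d).lt_of_ne' fun h => by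
    rw [h, mul_zero] at hxd
    linarith
  have hx2 : x ^ 2 ≤ M ^ 2 * ‖d‖ ^ 2 := by
    rw [← mul_pow]
    exact pow_le_pow_left₀ hx.le hxd 2
  rw [Real.rpow_add hx, Real.rpow_two, norm_div, div_pow]
  calc x ^ σ * x ^ 2 * (‖g‖ ^ 2 / ‖d‖ ^ 2)
      = x ^ 2 / ‖d‖ ^ 2 * (x ^ σ * ‖g‖ ^ 2) := by ring
    _ ≤ M ^ 2 * (x ^ σ * ‖g‖ ^ 2) := by
        gcongr
        rw [div_le_iff₀ (by positivity)]
        exact hx2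

lemma tsum_le_mul_tsum_of_le_mul {ι : Type*} {u v : ι → ℝ} {c : ℝ} (hu : ∀ k, 0 ≤ u k)
    (huv : ∀ k, u k ≤ c * v k) (hv : Summable v) :
    ∑' k, u k ≤ c * ∑' k, v k := by
  rw [← tsum_mul_left]
  have hcv := hv.mul_left c
  exact (hcv.of_nonneg_of_le hu huv).tsum_le_tsum huv hcv

theorem stmt_12 (C0 ν : ℝ) (hC0 : 0 < C0) (hν : 0 < ν) :
    ∃ C > 0, ∀ (a Ω Z σ : ℝ) (ω : ℂ) (f : ℕ → ℂ),
      0 < a → 1 ≤ Ω → 0 ≤ Z → Z ≤ Ω →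
      (∀ k : ℕ, 1 ≤ k →
        C0 * (Ω^2 + (k:ℝ)^2) ≤ ‖ω^2 + (↑(ν * (k:ℝ)^2 * Real.pi^2 / a^2) : ℂ)‖) →
      Summable (fun k : ℕ => (1 + ν*(k+1:ℝ)^2 + ν*Z^2) ^ σ * ‖f (k+1)‖ ^ 2) →
      (∑' k : ℕ, (1 + ν*(k+1:ℝ)^2 + ν*Z^2) ^ (σ+2) *
          ‖f (k+1) / (ω^2 + (↑(ν * (k+1:ℝ)^2 * Real.pi^2 / a^2) : ℂ))‖ ^ 2)
        ≤ C * ∑' k : ℕ, (1 + ν*(k+1:ℝ)^2 + ν*Z^2) ^ σ * ‖f (k+1)‖ ^ 2 := by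
  refine ⟨((1 + ν) / C0) ^ 2, by positivity, ?_⟩
  intro a Ω Z σ ω f _ hΩ hZ hZΩ hres hf
  refine tsum_le_mul_tsum_of_le_mul (fun k => by positivity) (fun k => ?_) hf
  have hweight : 0 < 1 + ν * (k + 1 : ℝ) ^ 2 + ν * Z ^ 2 := by positivity
  apply rpow_add_two_mul_norm_div_sq_le hweight
  have hresk := hres (k + 1) k.succ_pos
  rw [Nat.cast_succ] at hresk
  calc 1 + ν * (k + 1 : ℝ) ^ 2 + ν * Z ^ 2
      ≤ (1 + ν) * (Ω ^ 2 + (k + 1 : ℝ) ^ 2) :=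
        one_add_mul_sq_add_mul_sq_le hν.le hΩ hZ hZΩ _
    _ ≤ (1 + ν) / C0 * ‖ω ^ 2 + (↑(ν * (k + 1 : ℝ) ^ 2 * Real.pi ^ 2 / a ^ 2) : ℂ)‖ := by
        rw [div_mul_eq_mul_div, le_div_iff₀ hC0, mul_assoc, mul_comm _ C0]
        gcongr
end

section
/- Let s ∈ (-1/2, 1/2), Z ≥ 1. Suppose (φ_k)_{k≥1} are complex numbers with |φ_k| ≤ Σ_{l≥1} (|c_l|/l)[1/k + k/((k+l)(|k-l|+1))] for a sequence (c_l) with Σ_l (1+l²+Z²)^s |c_l|² < ∞. Then Σ_k (1+k²+Z²)^s |φ_k|² ≤ C Σ_l (1+l²+Z²)^s |c_l|² with C depending only on s (not on Z). -/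
/-!
Put `w n = (1 + n² + Z²) ^ (s / 2)`. For every `Z` one has
`w k ≤ ((k / l) ^ s + (l / k) ^ s) * w l`, so `x k = w k ‖φ k‖` is bounded by `∑ l, G k l * y l`
with `y l = w l ‖c l‖`, where `G` is a symmetric majorant of `((k / l) ^ s + (l / k) ^ s) * K k l`:
off the band `l / 2 < k < 2 l` the kernel satisfies `K k l ≤ 3 / (k l)`, while on the band the
weight factor is at most `4` and `K k l ≤ 1 / (k l) + 1 / l`. Schur's test with the test function
`n ^ (-1/2)` then gives `∑ x k ^ 2 ≤ A ^ 2 ∑ y l ^ 2`, where `A` bounds the weighted row sums of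
`G`: the power part contributes `k ^ (s - 1) ζ(3/2 + s) + k ^ (-s - 1) ζ(3/2 - s) ≤ A k ^ (-1/2)`
because `|s| < 1/2`, and the band has fewer than `2 k` terms, each `O(k ^ (-3/2))`.
-/

open Real

noncomputable section

structure IsSchurWeight (K : ℕ → ℕ → ℝ) (h : ℕ → ℝ) (A B : ℝ) : Prop where
  nonneg : ∀ i j, 0 ≤ K i j
  pos : ∀ i, 0 < h i
  summable_row : ∀ i, Summable fun j => K i j * h j
  tsum_row_le : ∀ i, ∑' j, K i j * h j ≤ A * h i
  summable_col : ∀ j, Summable fun i => K i j * h i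
  tsum_col_le : ∀ j, ∑' i, K i j * h i ≤ B * h j

lemma two_mul_mul_le_add_div {a b c : ℝ} (hc : 0 < c) :
    2 * (a * b) ≤ a ^ 2 * c + b ^ 2 / c := by
  have : a ^ 2 * c + b ^ 2 / c - 2 * (a * b) = (a * c - b) ^ 2 / c := by
    field_simp; ring
  rw [← sub_nonneg, this]; positivity

namespace IsSchurWeight

variable {K : ℕ → ℕ → ℝ} {h x y : ℕ → ℝ} {A B : ℝ}

lemma mul_le (hS : IsSchurWeight K h A B) (i j : ℕ) : K i j * h i ≤ B * h j :=
  ((hS.summable_col j).le_tsum i fun i' _ => mul_nonneg (hS.nonneg i' j) (hS.pos i').le).trans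
    (hS.tsum_col_le j)

lemma summable_mul_sq_div (hS : IsSchurWeight K h A B) (hy2 : Summable fun j => y j ^ 2)
    (i : ℕ) : Summable fun j => K i j * (y j ^ 2 / h j) := by
  refine (hy2.mul_left (B / h i)).of_nonneg_of_le
    (fun j => mul_nonneg (hS.nonneg i j) (div_nonneg (sq_nonneg _) (hS.pos j).le)) fun j => ?_
  have hij := hS.mul_le i j
  have hi := hS.pos i
  have hj := hS.pos j
  rw [div_mul_eq_mul_div, le_div_iff₀ hi, mul_div_assoc', div_mul_eq_mul_div, div_le_iff₀ hj]
  nlinarith [sq_nonneg (y j)]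

lemma summable_mul (hS : IsSchurWeight K h A B) (hy : ∀ j, 0 ≤ y j)
    (hy2 : Summable fun j => y j ^ 2) (i : ℕ) : Summable fun j => K i j * y j := by
  refine ((((hS.summable_row i).add (hS.summable_mul_sq_div hy2 i)).div_const 2)).of_nonneg_of_le
    (fun j => mul_nonneg (hS.nonneg i j) (hy j)) fun j => ?_
  have := mul_le_mul_of_nonneg_left (two_mul_mul_le_add_div (a := 1) (b := y j) (hS.pos j))
    (hS.nonneg i j)
  linarith

lemma sq_le_mul_tsum (hS : IsSchurWeight K h A B) (hA : 0 < A) (hx : ∀ i, 0 ≤ x i)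
    (hy : ∀ j, 0 ≤ y j) (hy2 : Summable fun j => y j ^ 2)
    (hxK : ∀ i, x i ≤ ∑' j, K i j * y j) (i : ℕ) :
    x i ^ 2 ≤ A * h i * ∑' j, K i j * (y j ^ 2 / h j) := by
  have hi := hS.pos i
  have hT := hS.summable_mul_sq_div hy2 i
  -- AM-GM with weight `h j / (A * h i)`; the row bound turns the first half into `x i ^ 2 / 2`,
  -- which is then absorbed by the left-hand side.
  have hamgm : ∀ j, x i * (K i j * y j) ≤
      x i ^ 2 / (2 * A * h i) * (K i j * h j) + A * h i / 2 * (K i j * (y j ^ 2 / h j)) := by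
    intro j
    have hj := hS.pos j
    have := mul_le_mul_of_nonneg_left
      (two_mul_mul_le_add_div (a := x i) (b := y j) (c := h j / (A * h i)) (by positivity))
      (hS.nonneg i j)
    field_simp at this ⊢
    linarith
  have hsum : x i * ∑' j, K i j * y j ≤
      x i ^ 2 / (2 * A * h i) * (A * h i) + A * h i / 2 * ∑' j, K i j * (y j ^ 2 / h j) := by
    rw [← tsum_mul_left]
    refine (((hS.summable_mul hy hy2 i).mul_left (x i)).tsum_le_tsum hamgm
      (((hS.summable_row i).mul_left _).add (hT.mul_left _))).trans ?_
    rw [Summable.tsum_add ((hS.summable_row i).mul_left _) (hT.mul_left _), tsum_mul_left,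
      tsum_mul_left]
    gcongr
    exact hS.tsum_row_le i
  have hx2 : x i ^ 2 ≤ x i * ∑' j, K i j * y j := by
    rw [sq]; exact mul_le_mul_of_nonneg_left (hxK i) (hx i)
  have : x i ^ 2 / (2 * A * h i) * (A * h i) = x i ^ 2 / 2 := by field_simp
  linarith

theorem tsum_sq_le (hS : IsSchurWeight K h A B) (hA : 0 < A) (hx : ∀ i, 0 ≤ x i)
    (hy : ∀ j, 0 ≤ y j) (hy2 : Summable fun j => y j ^ 2)
    (hxK : ∀ i, x i ≤ ∑' j, K i j * y j) :
    ∑' i, x i ^ 2 ≤ A * B * ∑' j, y j ^ 2 := by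
  refine Real.tsum_le_of_sum_le (fun i => sq_nonneg (x i)) fun F => ?_
  have hT := hS.summable_mul_sq_div hy2
  have hcolF : ∀ j, ∑ i ∈ F, h i * (K i j * (y j ^ 2 / h j)) ≤ B * y j ^ 2 := by
    intro j
    have hj := hS.pos j
    have hF : ∑ i ∈ F, K i j * h i ≤ B * h j :=
      ((hS.summable_col j).sum_le_tsum F fun i _ =>
        mul_nonneg (hS.nonneg i j) (hS.pos i).le).trans (hS.tsum_col_le j)
    calc ∑ i ∈ F, h i * (K i j * (y j ^ 2 / h j))
        = (∑ i ∈ F, K i j * h i) * (y j ^ 2 / h j) := by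
          rw [Finset.sum_mul]; exact Finset.sum_congr rfl fun i _ => by ring
      _ ≤ B * h j * (y j ^ 2 / h j) := by gcongr
      _ = B * y j ^ 2 := by field_simp
  calc ∑ i ∈ F, x i ^ 2
      ≤ ∑ i ∈ F, A * h i * ∑' j, K i j * (y j ^ 2 / h j) :=
        Finset.sum_le_sum fun i _ => hS.sq_le_mul_tsum hA hx hy hy2 hxK i
    _ = A * ∑' j, ∑ i ∈ F, h i * (K i j * (y j ^ 2 / h j)) := by
        rw [Summable.tsum_finsetSum fun i _ => (hT i).mul_left (h i), Finset.mul_sum]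
        exact Finset.sum_congr rfl fun i _ => by rw [tsum_mul_left, mul_assoc]
    _ ≤ A * ∑' j, B * y j ^ 2 := by
        gcongr
        · exact summable_sum fun i _ => (hT i).mul_left _
        · exact hy2.mul_left B
        · exact hcolF _
    _ = A * B * ∑' j, y j ^ 2 := by rw [tsum_mul_left, mul_assoc]

end IsSchurWeight

namespace SineKernel

def kernel (k l : ℝ) : ℝ := 1 / l * (1 / k + k / ((k + l) * (|k - l| + 1)))

def nearDiagonal (k l : ℝ) : ℝ := if l < 2 * k ∧ k < 2 * l then 4 * (1 / k + 1 / l) else 0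

def kernelMajorant (t k l : ℝ) : ℝ :=
  3 * (k ^ (t - 1) * l ^ (-t - 1) + k ^ (-t - 1) * l ^ (t - 1)) + nearDiagonal k l

def pSeries (p : ℝ) : ℝ := ∑' n : ℕ, ((n : ℝ) + 1) ^ (-p)

def schurConst (t : ℝ) : ℝ := 3 * (pSeries (3 / 2 + t) + pSeries (3 / 2 - t)) + 48

variable {t k l : ℝ}

lemma kernel_nonneg (hk : 0 < k) (hl : 0 < l) : 0 ≤ kernel k l := by
  unfold kernel; positivity

lemma kernel_le_of_far (hk : 0 < k) (hl : 0 < l) (hfar : 2 * l ≤ k ∨ 2 * k ≤ l) :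
    kernel k l ≤ 3 * (1 / l * (1 / k)) := by
  have hfrac : k / ((k + l) * (|k - l| + 1)) ≤ 2 / k := by
    rw [div_le_div_iff₀ (by positivity) hk]
    rcases hfar with h | h
    · rw [abs_of_nonneg (by linarith)]; nlinarith
    · rw [abs_of_nonpos (by linarith)]; nlinarith
  calc kernel k l ≤ 1 / l * (1 / k + 2 / k) := by unfold kernel; gcongr
    _ = 3 * (1 / l * (1 / k)) := by ring

lemma kernel_le (hk : 0 < k) (hl : 0 < l) : kernel k l ≤ 1 / l * (1 / k) + 1 / l := by
  have hfrac : k / ((k + l) * (|k - l| + 1)) ≤ 1 := by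
    rw [div_le_one (by positivity)]
    nlinarith [abs_nonneg (k - l)]
  unfold kernel
  have : 0 < 1 / l := by positivity
  nlinarith

lemma rpow_le_two {q : ℝ} (hq₁ : 1 / 2 ≤ q) (hq₂ : q ≤ 2) (ht : |t| ≤ 1) :
    q ^ t ≤ 2 := by
  rcases le_total 0 t with h | h
  · calc q ^ t ≤ 2 ^ t := rpow_le_rpow (by linarith) hq₂ h
      _ ≤ 2 ^ (1 : ℝ) := rpow_le_rpow_of_exponent_le one_le_two (by linarith [le_abs_self t])
      _ = 2 := rpow_one 2
  · calc q ^ t ≤ (1 / 2) ^ t := rpow_le_rpow_of_nonpos (by norm_num) hq₁ h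
      _ = 2 ^ (-t) := by rw [one_div, inv_rpow zero_le_two, rpow_neg zero_le_two]
      _ ≤ 2 ^ (1 : ℝ) := rpow_le_rpow_of_exponent_le one_le_two (by linarith [neg_abs_le t])
      _ = 2 := rpow_one 2

lemma rpow_div_add_rpow_div_mul (hk : 0 < k) (hl : 0 < l) :
    ((k / l) ^ t + (l / k) ^ t) * (1 / l * (1 / k)) =
      k ^ (t - 1) * l ^ (-t - 1) + k ^ (-t - 1) * l ^ (t - 1) := by
  simp only [div_rpow hk.le hl.le, div_rpow hl.le hk.le, sub_eq_add_neg, rpow_add hk,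
    rpow_add hl, rpow_neg hk.le, rpow_neg hl.le, rpow_one]
  field_simp

lemma mul_kernel_le_kernelMajorant (hk : 0 < k) (hl : 0 < l) (ht : |t| ≤ 1) :
    ((k / l) ^ t + (l / k) ^ t) * kernel k l ≤ kernelMajorant t k l := by
  set r := (k / l) ^ t + (l / k) ^ t with hr_def
  have hr : 0 ≤ r := by positivity
  rw [kernelMajorant, nearDiagonal, ← rpow_div_add_rpow_div_mul hk hl]
  split_ifs with hnear
  · obtain ⟨h₁, h₂⟩ := hnear
    have hr4 : r ≤ 4 := by
      have e₁ := rpow_le_two (q := k / l) (by rw [le_div_iff₀ hl]; linarith)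
        (by rw [div_le_iff₀ hl]; linarith) ht
      have e₂ := rpow_le_two (q := l / k) (by rw [le_div_iff₀ hk]; linarith)
        (by rw [div_le_iff₀ hk]; linarith) ht
      linarith
    have hrl : r * (1 / l) ≤ 4 * (1 / l) := mul_le_mul_of_nonneg_right hr4 (by positivity)
    have : 0 ≤ r * (1 / l * (1 / k)) := by positivity
    have : 0 ≤ 1 / k := by positivity
    calc r * kernel k l ≤ r * (1 / l * (1 / k)) + r * (1 / l) := by
          rw [← mul_add]; exact mul_le_mul_of_nonneg_left (kernel_le hk hl) hr
      _ ≤ 3 * (r * (1 / l * (1 / k))) + 4 * (1 / k + 1 / l) := by linarith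
  · have hfar : 2 * l ≤ k ∨ 2 * k ≤ l := by
      by_contra! h
      exact hnear ⟨by linarith [h.1], by linarith [h.2]⟩
    have := mul_le_mul_of_nonneg_left (kernel_le_of_far hk hl hfar) hr
    linarith

lemma kernelMajorant_comm (t k l : ℝ) : kernelMajorant t k l = kernelMajorant t l k := by
  unfold kernelMajorant nearDiagonal
  congr 1
  · ring
  · simp only [and_comm, add_comm]

lemma kernelMajorant_nonneg (hk : 0 < k) (hl : 0 < l) : 0 ≤ kernelMajorant t k l := by
  unfold kernelMajorant nearDiagonal
  split_ifs <;> positivity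

lemma summable_succ_rpow_neg {p : ℝ} (hp : 1 < p) :
    Summable fun n : ℕ => ((n : ℝ) + 1) ^ (-p) := by
  have h := (summable_nat_add_iff 1).mpr (Real.summable_nat_rpow.mpr (by linarith : -p < -1))
  exact h.congr fun n => by push_cast; rfl

lemma pSeries_nonneg (p : ℝ) : 0 ≤ pSeries p :=
  tsum_nonneg fun n => by positivity

lemma schurConst_pos (t : ℝ) : 0 < schurConst t := by
  have := pSeries_nonneg (3 / 2 + t)
  have := pSeries_nonneg (3 / 2 - t)
  unfold schurConst; linarith

lemma rpow_neg_half_le_of_lt_two_mul (hk : 0 < k) (h : k < 2 * l) :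
    l ^ (-(1 / 2) : ℝ) ≤ 2 * k ^ (-(1 / 2) : ℝ) := by
  calc l ^ (-(1 / 2) : ℝ) ≤ (k / 2) ^ (-(1 / 2) : ℝ) :=
        rpow_le_rpow_of_nonpos (by positivity) (by linarith) (by norm_num)
    _ = 2 ^ (1 / 2 : ℝ) * k ^ (-(1 / 2) : ℝ) := by
        rw [div_rpow hk.le zero_le_two, rpow_neg zero_le_two, div_inv_eq_mul, mul_comm]
    _ ≤ 2 * k ^ (-(1 / 2) : ℝ) := by
        gcongr
        calc (2 : ℝ) ^ (1 / 2 : ℝ) ≤ 2 ^ (1 : ℝ) :=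
              rpow_le_rpow_of_exponent_le one_le_two (by norm_num)
          _ = 2 := rpow_one 2

lemma nearDiagonal_mul_rpow_le (hk : 0 < k) :
    nearDiagonal k l * l ^ (-(1 / 2) : ℝ) ≤ 24 / k * k ^ (-(1 / 2) : ℝ) := by
  rw [nearDiagonal]
  split_ifs with hnear
  · have hl : 0 < l := by linarith [hnear.2]
    have hsum : 1 / k + 1 / l ≤ 3 / k := by
      rw [div_add_div _ _ hk.ne' hl.ne', div_le_div_iff₀ (by positivity) hk]; nlinarith
    calc 4 * (1 / k + 1 / l) * l ^ (-(1 / 2) : ℝ)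
        ≤ 4 * (3 / k) * (2 * k ^ (-(1 / 2) : ℝ)) := by
          gcongr
          exact rpow_neg_half_le_of_lt_two_mul hk hnear.2
      _ = 24 / k * k ^ (-(1 / 2) : ℝ) := by ring
  · rw [zero_mul]; positivity

lemma hasSum_powerPart_mul_rpow (ht : |t| < 1 / 2) (k : ℝ) :
    HasSum (fun j : ℕ => 3 * (k ^ (t - 1) * ((j : ℝ) + 1) ^ (-t - 1) +
        k ^ (-t - 1) * ((j : ℝ) + 1) ^ (t - 1)) * ((j : ℝ) + 1) ^ (-(1 / 2) : ℝ))
      (3 * (k ^ (t - 1) * pSeries (3 / 2 + t) + k ^ (-t - 1) * pSeries (3 / 2 - t))) := by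
  obtain ⟨ht₁, ht₂⟩ := abs_lt.mp ht
  refine ((((summable_succ_rpow_neg (p := 3 / 2 + t) (by linarith)).hasSum.mul_left
    (k ^ (t - 1))).add ((summable_succ_rpow_neg (p := 3 / 2 - t) (by linarith)).hasSum.mul_left
    (k ^ (-t - 1)))).mul_left 3).congr_fun fun j => ?_
  have hl : (0 : ℝ) < j + 1 := by positivity
  rw [show -(3 / 2 + t) = -t - 1 + -(1 / 2) by ring, show -(3 / 2 - t) = t - 1 + -(1 / 2) by ring,
    rpow_add hl, rpow_add hl]
  ring

lemma summable_nearDiagonal_and_tsum_le (i : ℕ) :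
    Summable (fun j : ℕ =>
        nearDiagonal ((i : ℝ) + 1) ((j : ℝ) + 1) * ((j : ℝ) + 1) ^ (-(1 / 2) : ℝ)) ∧
      ∑' j : ℕ,
        nearDiagonal ((i : ℝ) + 1) ((j : ℝ) + 1) * ((j : ℝ) + 1) ^ (-(1 / 2) : ℝ) ≤
        48 * ((i : ℝ) + 1) ^ (-(1 / 2) : ℝ) := by
  set k : ℝ := (i : ℝ) + 1 with hk_def
  have hk : 0 < k := by positivity
  have hzero : ∀ j ∉ Finset.range (2 * i + 1),
      nearDiagonal k ((j : ℝ) + 1) * ((j : ℝ) + 1) ^ (-(1 / 2) : ℝ) = 0 := by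
    intro j hj
    have : 2 * k ≤ (j : ℝ) + 1 := by
      rw [Finset.mem_range, not_lt] at hj
      rw [hk_def]; exact_mod_cast (by omega : 2 * (i + 1) ≤ j + 1)
    rw [nearDiagonal, if_neg (fun h => by linarith [h.1]), zero_mul]
  refine ⟨summable_of_ne_finset_zero hzero, ?_⟩
  rw [tsum_eq_sum hzero]
  calc ∑ j ∈ Finset.range (2 * i + 1),
        nearDiagonal k ((j : ℝ) + 1) * ((j : ℝ) + 1) ^ (-(1 / 2) : ℝ)
      ≤ (Finset.range (2 * i + 1)).card • (24 / k * k ^ (-(1 / 2) : ℝ)) :=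
        Finset.sum_le_card_nsmul _ _ _ fun j _ => nearDiagonal_mul_rpow_le hk
    _ ≤ 2 * k * (24 / k * k ^ (-(1 / 2) : ℝ)) := by
        rw [Finset.card_range, nsmul_eq_mul]
        gcongr
        rw [hk_def]; push_cast; linarith
    _ = 48 * k ^ (-(1 / 2) : ℝ) := by field_simp; ring

lemma summable_kernelMajorant_and_tsum_le (ht : |t| < 1 / 2) (i : ℕ) :
    Summable (fun j : ℕ =>
        kernelMajorant t ((i : ℝ) + 1) ((j : ℝ) + 1) * ((j : ℝ) + 1) ^ (-(1 / 2) : ℝ)) ∧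
      ∑' j : ℕ,
        kernelMajorant t ((i : ℝ) + 1) ((j : ℝ) + 1) * ((j : ℝ) + 1) ^ (-(1 / 2) : ℝ) ≤
        schurConst t * ((i : ℝ) + 1) ^ (-(1 / 2) : ℝ) := by
  obtain ⟨ht₁, ht₂⟩ := abs_lt.mp ht
  obtain ⟨hnear, hnear_le⟩ := summable_nearDiagonal_and_tsum_le i
  have hsum : HasSum (fun j : ℕ =>
      kernelMajorant t ((i : ℝ) + 1) ((j : ℝ) + 1) * ((j : ℝ) + 1) ^ (-(1 / 2) : ℝ)) _ :=
    ((hasSum_powerPart_mul_rpow ht ((i : ℝ) + 1)).add hnear.hasSum).congr_fun fun j => by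
      rw [kernelMajorant, add_mul]
  refine ⟨hsum.summable, ?_⟩
  rw [hsum.tsum_eq]
  have hk : (1 : ℝ) ≤ (i : ℝ) + 1 := by simp
  have e₁ : ((i : ℝ) + 1) ^ (t - 1) ≤ ((i : ℝ) + 1) ^ (-(1 / 2) : ℝ) :=
    rpow_le_rpow_of_exponent_le hk (by linarith)
  have e₂ : ((i : ℝ) + 1) ^ (-t - 1) ≤ ((i : ℝ) + 1) ^ (-(1 / 2) : ℝ) :=
    rpow_le_rpow_of_exponent_le hk (by linarith)
  have := pSeries_nonneg (3 / 2 + t)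
  have := pSeries_nonneg (3 / 2 - t)
  calc 3 * (((i : ℝ) + 1) ^ (t - 1) * pSeries (3 / 2 + t) +
        ((i : ℝ) + 1) ^ (-t - 1) * pSeries (3 / 2 - t)) + ∑' j : ℕ,
        nearDiagonal ((i : ℝ) + 1) ((j : ℝ) + 1) * ((j : ℝ) + 1) ^ (-(1 / 2) : ℝ)
      ≤ 3 * (((i : ℝ) + 1) ^ (-(1 / 2) : ℝ) * pSeries (3 / 2 + t) +
        ((i : ℝ) + 1) ^ (-(1 / 2) : ℝ) * pSeries (3 / 2 - t)) +
        48 * ((i : ℝ) + 1) ^ (-(1 / 2) : ℝ) := by gcongr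
    _ = schurConst t * ((i : ℝ) + 1) ^ (-(1 / 2) : ℝ) := by unfold schurConst; ring

theorem isSchurWeight_kernelMajorant (ht : |t| < 1 / 2) :
    IsSchurWeight (fun i j : ℕ => kernelMajorant t ((i : ℝ) + 1) ((j : ℝ) + 1))
      (fun j : ℕ => ((j : ℝ) + 1) ^ (-(1 / 2) : ℝ)) (schurConst t) (schurConst t) where
  nonneg i j := kernelMajorant_nonneg (by positivity) (by positivity)
  pos j := by positivity
  summable_row i := (summable_kernelMajorant_and_tsum_le ht i).1
  tsum_row_le i := (summable_kernelMajorant_and_tsum_le ht i).2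
  summable_col j := (summable_kernelMajorant_and_tsum_le ht j).1.congr fun i => by
    rw [kernelMajorant_comm]
  tsum_col_le j := (tsum_congr fun i => by rw [kernelMajorant_comm]).trans_le
    (summable_kernelMajorant_and_tsum_le ht j).2

lemma add_sq_rpow_half_le {a σ : ℝ} (ha : 0 ≤ a) (hk : 0 < k) (hl : 0 < l) :
    (a + k ^ 2) ^ (σ / 2) ≤ ((k / l) ^ σ + (l / k) ^ σ) * (a + l ^ 2) ^ (σ / 2) := by
  have hv : 0 ≤ (a + l ^ 2) ^ (σ / 2) := by positivity
  have hscale : (k / l) ^ σ * (a + l ^ 2) ^ (σ / 2) = ((k / l) ^ 2 * (a + l ^ 2)) ^ (σ / 2) := by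
    rw [mul_rpow (by positivity) (by positivity), ← rpow_natCast (k / l) 2,
      ← rpow_mul (by positivity), Nat.cast_ofNat, mul_div_cancel₀ σ two_ne_zero]
  have hsq : (k / l) ^ 2 * (a + l ^ 2) = a * (k / l) ^ 2 + k ^ 2 := by field_simp
  have hkl := rpow_nonneg (div_pos hk hl).le σ
  have hlk := rpow_nonneg (div_pos hl hk).le σ
  rcases le_total k l with h | h <;> rcases le_total 0 σ with hσ | hσ
  · have h₁ : (a + k ^ 2) ^ (σ / 2) ≤ (a + l ^ 2) ^ (σ / 2) :=
      rpow_le_rpow (by positivity) (by nlinarith) (by linarith)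
    have h₂ : 1 ≤ (l / k) ^ σ := one_le_rpow ((one_le_div hk).2 h) hσ
    nlinarith
  · have hq : (k / l) ^ 2 ≤ 1 := pow_le_one₀ (by positivity) ((div_le_one hl).2 h)
    have : (a + k ^ 2) ^ (σ / 2) ≤ (k / l) ^ σ * (a + l ^ 2) ^ (σ / 2) := by
      rw [hscale]
      exact rpow_le_rpow_of_nonpos (by positivity) (by nlinarith) (by linarith)
    nlinarith
  · have hq : 1 ≤ (k / l) ^ 2 := one_le_pow₀ ((one_le_div hl).2 h)
    have : (a + k ^ 2) ^ (σ / 2) ≤ (k / l) ^ σ * (a + l ^ 2) ^ (σ / 2) := by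
      rw [hscale]
      exact rpow_le_rpow (by positivity) (by nlinarith) (by linarith)
    nlinarith
  · have h₁ : (a + k ^ 2) ^ (σ / 2) ≤ (a + l ^ 2) ^ (σ / 2) :=
      rpow_le_rpow_of_nonpos (by positivity) (by nlinarith) (by linarith)
    have h₂ : 1 ≤ (l / k) ^ σ :=
      one_le_rpow_of_pos_of_le_one_of_nonpos (by positivity) ((div_le_one hk).2 h) hσ
    nlinarith

lemma mul_le_tsum_kernelMajorant {w : ℝ → ℝ} {v : ℕ → ℝ} {u : ℝ} (ht : |t| ≤ 1)
    (hk : 0 < k) (hw : ∀ l, 0 < l → w k ≤ ((k / l) ^ t + (l / k) ^ t) * w l)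
    (hw0 : ∀ l, 0 ≤ w l) (hv : ∀ j, 0 ≤ v j)
    (hsum : Summable fun j : ℕ => kernelMajorant t k (j + 1) * (w (j + 1) * v j))
    (hu : u ≤ ∑' j : ℕ, v j * kernel k (j + 1)) :
    w k * u ≤ ∑' j : ℕ, kernelMajorant t k (j + 1) * (w (j + 1) * v j) := by
  have hterm : ∀ j : ℕ, w k * (v j * kernel k (j + 1)) ≤
      kernelMajorant t k (j + 1) * (w (j + 1) * v j) := by
    intro j
    have hl : (0 : ℝ) < j + 1 := by positivity
    calc w k * (v j * kernel k (j + 1))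
        ≤ ((k / (j + 1)) ^ t + ((j + 1) / k) ^ t) * w (j + 1) * (v j * kernel k (j + 1)) := by
          gcongr
          · exact mul_nonneg (hv j) (kernel_nonneg hk hl)
          · exact hw _ hl
      _ = ((k / (j + 1)) ^ t + ((j + 1) / k) ^ t) * kernel k (j + 1) * (w (j + 1) * v j) := by ring
      _ ≤ kernelMajorant t k (j + 1) * (w (j + 1) * v j) := by
          gcongr
          · exact mul_nonneg (hw0 _) (hv j)
          · exact mul_kernel_le_kernelMajorant hk hl ht
  have hnonneg : ∀ j : ℕ, 0 ≤ w k * (v j * kernel k (j + 1)) := fun j =>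
    mul_nonneg (hw0 k) (mul_nonneg (hv j) (kernel_nonneg hk (by positivity)))
  calc w k * u ≤ w k * ∑' j : ℕ, v j * kernel k (j + 1) := by gcongr; exact hw0 k
    _ = ∑' j : ℕ, w k * (v j * kernel k (j + 1)) := tsum_mul_left.symm
    _ ≤ _ := (hsum.of_nonneg_of_le hnonneg hterm).tsum_le_tsum hterm hsum

end SineKernel

end

open SineKernel in
theorem stmt_17 (s : ℝ) (hs : s ∈ Set.Ioo (-(1:ℝ)/2) (1/2)) :
    ∃ C > 0, ∀ (Z : ℝ), 1 ≤ Z → ∀ (φ c : ℕ → ℂ),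
      Summable (fun l : ℕ => (1 + (l+1:ℝ)^2 + Z^2) ^ s * ‖c (l+1)‖ ^ 2) →
      (∀ k : ℕ, 1 ≤ k → ‖φ k‖ ≤
        ∑' l : ℕ, (‖c (l+1)‖ / (l+1:ℝ))
          * (1 / (k:ℝ) + (k:ℝ) / (((k:ℝ) + (l+1:ℝ)) * (|(k:ℝ) - (l+1:ℝ)| + 1)))) →
      ∑' k : ℕ, (1 + (k+1:ℝ)^2 + Z^2) ^ s * ‖φ (k+1)‖ ^ 2
        ≤ C * ∑' l : ℕ, (1 + (l+1:ℝ)^2 + Z^2) ^ s * ‖c (l+1)‖ ^ 2 := by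
  have hs' : |s| < 1 / 2 := abs_lt.mpr ⟨by linarith [hs.1], hs.2⟩
  refine ⟨schurConst s ^ 2, pow_pos (schurConst_pos s) 2, fun Z _ φ c hc hφ => ?_⟩
  set w : ℝ → ℝ := fun n => (1 + n ^ 2 + Z ^ 2) ^ (s / 2) with hw_def
  have hw0 : ∀ n, 0 ≤ w n := fun n => by positivity
  have hw_sq : ∀ n, (1 + n ^ 2 + Z ^ 2) ^ s = w n ^ 2 := fun n => by
    rw [hw_def, ← rpow_natCast ((1 + n ^ 2 + Z ^ 2) ^ (s / 2)) 2, ← rpow_mul (by positivity)]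
    norm_num
  have hw : ∀ k l : ℝ, 0 < k → 0 < l → w k ≤ ((k / l) ^ s + (l / k) ^ s) * w l := by
    intro k l hk hl
    simpa only [hw_def, add_right_comm _ _ (Z ^ 2), add_comm (Z ^ 2)] using
      add_sq_rpow_half_le (σ := s) (a := 1 + Z ^ 2) (by positivity) hk hl
  have hy2 : Summable fun j : ℕ => (w (j + 1) * ‖c (j + 1)‖) ^ 2 :=
    hc.congr fun j => by rw [hw_sq, mul_pow]
  simp only [hw_sq, ← mul_pow]
  rw [sq (schurConst s)]
  refine (isSchurWeight_kernelMajorant hs').tsum_sq_le (schurConst_pos s) (fun i => by positivity)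
    (fun j => by positivity) hy2 fun i => ?_
  have hφi := hφ (i + 1) (by omega)
  push_cast at hφi
  exact mul_le_tsum_kernelMajorant (by linarith [hs']) (by positivity) (fun l hl => hw _ l
    (by positivity) hl) hw0 (fun j => norm_nonneg _)
    ((isSchurWeight_kernelMajorant hs').summable_mul (fun j => by positivity) hy2 i)
    (hφi.trans_eq (tsum_congr fun j => by unfold kernel; ring))
end

section
/- Let α ∈ (-1, 0) (a fixed exponent). Then there exists c > 0 and τ0 ≥ 1 such that for all real τ with |τ| ≥ τ0: |τ| · Σ_{k odd, k ≥ |τ|^{1/2}} k^{1-α} / ((1 + ν k²π²/a²)² + τ²) ≥ c |τ|^{-α/2}, for fixed constants ν, a > 0. -/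
/-!
Put `t = |τ|`, `s = √t` and `P = νπ²/a²`. At least `s` odd integers `k` lie in `[s, 4s + 3] ⊆ [s, 7s]`;
for each of them `k^(1-α) ≥ s^(1-α)` and `k² ≤ 49t`, so the denominator is at most `K t²` with
`K = (1 + 49P)² + 1`. These terms alone give `t · s · s^(1-α) / (K t²) = t^(-α/2) / K`; the full
series converges because its terms are `O(k^(-3-α))`.
-/

open Real Filter Finset

lemma summable_rpow_div_one_add_mul_sq_sq_add {P β σ : ℝ} (hP : 0 < P) (hβ : β < 3)
    (hσ : 0 ≤ σ) : Summable fun k : ℕ => (k : ℝ) ^ β / ((1 + P * k ^ 2) ^ 2 + σ) := by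
  refine .of_norm_bounded_eventually_nat
    ((summable_nat_rpow.mpr (by linarith : β - 4 < -1)).mul_left (P ^ 2)⁻¹) ?_
  filter_upwards [eventually_ge_atTop 1] with k hk
  have hk0 : (0 : ℝ) < k := by exact_mod_cast hk
  have hden : (k : ℝ) ^ (4 : ℝ) * P ^ 2 ≤ (1 + P * k ^ 2) ^ 2 + σ := by
    rw [show (4 : ℝ) = (4 : ℕ) by norm_num, rpow_natCast]
    nlinarith [mul_pos hP (pow_pos hk0 2)]
  rw [Real.norm_of_nonneg (by positivity), rpow_sub hk0, ← div_eq_inv_mul, div_div]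
  exact div_le_div_of_nonneg_left (by positivity) (by positivity) hden

lemma exists_finset_odd_card_ge (s : ℝ) (hs : 0 ≤ s) :
    ∃ S : Finset ℕ, s ≤ #S ∧ ∀ k ∈ S, Odd k ∧ s ≤ k ∧ (k : ℝ) ≤ 4 * s + 3 := by
  set M := ⌈s⌉₊
  have hM : (M : ℝ) < s + 1 := Nat.ceil_lt_add_one hs
  refine ⟨(range M).image fun j => 2 * (M + j) + 1, ?_, ?_⟩
  · rw [card_image_of_injective _ fun i j h => by omega, card_range]
    exact Nat.le_ceil s
  · simp only [mem_image, mem_range]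
    rintro _ ⟨j, hj, rfl⟩
    have hj' : (j : ℝ) + 1 ≤ M := by exact_mod_cast hj
    refine ⟨⟨M + j, rfl⟩, ?_, ?_⟩ <;> push_cast <;> linarith [Nat.le_ceil s, j.cast_nonneg (α := ℝ)]

lemma one_add_mul_sq_add_sq_le {P C t x : ℝ} (hP : 0 ≤ P) (ht : 1 ≤ t) (hx₀ : 0 ≤ x)
    (hx : x ≤ C * t) : (1 + P * x) ^ 2 + t ^ 2 ≤ ((1 + C * P) ^ 2 + 1) * t ^ 2 := by
  have h : 1 + P * x ≤ (1 + C * P) * t := by nlinarith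
  nlinarith [mul_self_le_mul_self (by positivity) h]

lemma card_mul_le_tsum {f : ℕ → ℝ} (hf : Summable f) (hf₀ : ∀ k, 0 ≤ f k) (S : Finset ℕ) {m : ℝ}
    (hm : ∀ k ∈ S, m ≤ f k) : #S * m ≤ ∑' k, f k := by
  rw [← nsmul_eq_mul]
  exact (S.card_nsmul_le_sum f m hm).trans (hf.sum_le_tsum S fun k _ => hf₀ k)

theorem div_le_mul_tsum_odd_ge_sqrt {P α t : ℝ} (hP : 0 < P) (hα₁ : -2 < α) (hα₂ : α ≤ 1)
    (ht : 1 ≤ t) :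
    t ^ (-α / 2) / ((1 + 49 * P) ^ 2 + 1) ≤ t * ∑' k : ℕ,
      if Odd k ∧ √t ≤ k then (k : ℝ) ^ (1 - α) / ((1 + P * k ^ 2) ^ 2 + t ^ 2) else 0 := by
  set K := (1 + 49 * P) ^ 2 + 1
  set s := √t with hs_def
  have ht₀ : 0 < t := by linarith
  have hs : 1 ≤ s := one_le_sqrt.mpr ht
  set f : ℕ → ℝ := fun k =>
    if Odd k ∧ s ≤ k then (k : ℝ) ^ (1 - α) / ((1 + P * k ^ 2) ^ 2 + t ^ 2) else 0
  have hf₀ : ∀ k, 0 ≤ f k := fun k => by dsimp only [f]; split_ifs <;> positivity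
  have hf : Summable f :=
    (summable_rpow_div_one_add_mul_sq_sq_add hP (by linarith : 1 - α < 3) (sq_nonneg t)).of_nonneg_of_le
      hf₀ fun k => by dsimp only [f]; split_ifs <;> first | rfl | positivity
  obtain ⟨S, hS, hSk⟩ := exists_finset_odd_card_ge s (by linarith)
  have hterm : ∀ k ∈ S, s ^ (1 - α) / (K * t ^ 2) ≤ f k := by
    intro k hk
    obtain ⟨hodd, hsk, hk⟩ := hSk k hk
    have hk2 : (k : ℝ) ^ 2 ≤ 49 * t := by nlinarith [sq_sqrt ht₀.le]
    simp only [f, if_pos (And.intro hodd hsk)]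
    exact div_le_div₀ (by positivity) (rpow_le_rpow (by linarith) hsk (by linarith))
      (by positivity) (one_add_mul_sq_add_sq_le hP.le ht (by positivity) hk2)
  have hpow : s * s ^ (1 - α) = t ^ (-α / 2) * t := by
    rw [← rpow_one_add' (by positivity) (by linarith), hs_def, sqrt_eq_rpow t, ← rpow_mul ht₀.le,
      ← rpow_add_one ht₀.ne']
    ring_nf
  calc t ^ (-α / 2) / K = t * (s * (s ^ (1 - α) / (K * t ^ 2))) := by
        rw [← mul_div_assoc, hpow]; field_simp
    _ ≤ t * (#S * (s ^ (1 - α) / (K * t ^ 2))) := by gcongr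
    _ ≤ t * ∑' k, f k := by gcongr; exact card_mul_le_tsum hf hf₀ S hterm

theorem stmt_19 (ν a : ℝ) (hν : 0 < ν) (ha : 0 < a) (α : ℝ)
    (hα : α ∈ Set.Ioo (-1:ℝ) 0) :
    ∃ c > 0, ∃ τ0 : ℝ, 1 ≤ τ0 ∧ ∀ τ : ℝ, τ0 ≤ |τ| →
      c * |τ| ^ (-α/2) ≤ |τ| * ∑' k : ℕ,
        (if Odd k ∧ Real.sqrt |τ| ≤ (k:ℝ)
          then (k:ℝ) ^ (1-α) / ((1 + ν * (k:ℝ)^2 * Real.pi^2 / a^2)^2 + τ^2)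
          else 0) := by
  obtain ⟨hα₁, hα₂⟩ := hα
  set P := ν * π ^ 2 / a ^ 2
  refine ⟨1 / ((1 + 49 * P) ^ 2 + 1), by positivity, 1, le_rfl, fun τ hτ => ?_⟩
  have hP : ∀ x : ℝ, ν * x ^ 2 * π ^ 2 / a ^ 2 = P * x ^ 2 := fun x => by ring
  simp only [hP, ← sq_abs τ, one_div_mul_eq_div]
  exact div_le_mul_tsum_odd_ge_sqrt (by positivity) (by linarith) (by linarith) hτ
end
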